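/- arXiv:2404.09713 — 3 statements merged into one kernel-verified Lean document; each statement's English description precedes it below -/
import Mathlib

section
/- Let Γ ⊂ Homeo(M) be a non-elementary convergence group and σ : Γ × M → ℝ an expanding κ-coarse-cocycle. Then there is a choice of magnitude ‖·‖_σ such that for every x ∈ Λ(Γ) and α ∈ Γ one has limsup_{γ → x} |σ(α, x) − (‖αγ‖_σ − ‖γ‖_σ)| ≤ 2κ, where the limsup is over γ ∈ Γ converging to x in the compactifying topology on Γ ⊔ M. Consequently, for any choice of magnitude ‖·‖'_σ there exists C > 0 such that limsup_{γ → x} |σ(α, x) − (‖αγ‖'_σ − ‖γ‖'_σ)| ≤ C for all x ∈ Λ(Γ) and α ∈ Γ. -/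
open Filter Topology MeasureTheory Set

/-! Background definitions: convergence groups, coarse cocycles,
Patterson–Sullivan measures, following Blayac–Canary–Zhu–Zimmer. -/

/-- The group of self-homeomorphisms of a topological space,
with `(f * g) x = f (g x)`. -/
instance homeomorphGroup {X : Type*} [TopologicalSpace X] : Group (X ≃ₜ X) where
  mul f g := g.trans f
  one := Homeomorph.refl X
  inv := Homeomorph.symm
  mul_assoc f g h := Homeomorph.ext fun _ => rfl
  one_mul f := Homeomorph.ext fun _ => rfl
  mul_one f := Homeomorph.ext fun _ => rfl
  inv_mul_cancel f := Homeomorph.ext fun x => f.symm_apply_apply x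

/-- Locally uniform convergence of a sequence of maps to a constant map on a set `S`,
phrased purely topologically.  (For maps into a uniform space this is equivalent to
`TendstoLocallyUniformlyOn` with constant limit.) -/
def TendstoLocallyUniformlyOnConst {X Y : Type*} [TopologicalSpace X] [TopologicalSpace Y]
    (F : ℕ → X → Y) (a : Y) (S : Set X) : Prop :=
  ∀ U ∈ nhds a, ∀ x ∈ S, ∃ V ∈ nhdsWithin x S, ∀ᶠ n in Filter.atTop, ∀ y ∈ V, F n y ∈ U

variable {M : Type*} [MetricSpace M] [CompactSpace M]

/-- `Γ` is a (discrete) convergence group: every sequence of pairwise distinct elements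
has a subsequence converging to a constant map locally uniformly off a point. -/
def IsConvergenceGroup (Γ : Subgroup (M ≃ₜ M)) : Prop :=
  ∀ γ : ℕ → Γ, Function.Injective γ →
    ∃ (a b : M) (φ : ℕ → ℕ), StrictMono φ ∧
      TendstoLocallyUniformlyOnConst (fun j x => (γ (φ j) : M ≃ₜ M) x) a {b}ᶜ

/-- The limit set of `Γ`. -/
def limitSet (Γ : Subgroup (M ≃ₜ M)) : Set M :=
  {a | ∃ (b : M) (γ : ℕ → Γ),
    TendstoLocallyUniformlyOnConst (fun n x => (γ n : M ≃ₜ M) x) a {b}ᶜ}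

/-- `Γ` is non-elementary: its limit set has at least 3 points. -/
def IsNonElementary (Γ : Subgroup (M ≃ₜ M)) : Prop := 3 ≤ (limitSet Γ).encard

/-- Conical limit points. -/
def IsConicalLimitPoint (Γ : Subgroup (M ≃ₜ M)) (x : M) : Prop :=
  ∃ (a b : M) (γ : ℕ → Γ), a ≠ b ∧
    Tendsto (fun n => (γ n : M ≃ₜ M) x) atTop (nhds a) ∧
    ∀ y : M, y ≠ x → Tendsto (fun n => (γ n : M ≃ₜ M) y) atTop (nhds b)

/-- The conical limit set `Λ^{con}(Γ)`. -/
def conicalLimitSet (Γ : Subgroup (M ≃ₜ M)) : Set M := {x | IsConicalLimitPoint Γ x}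

/-- The natural action of `Γ` on `Γ ⊔ M`. -/
def sumAction (Γ : Subgroup (M ≃ₜ M)) (γ : Γ) : Γ ⊕ M → Γ ⊕ M :=
  Sum.elim (fun α => Sum.inl (γ * α)) (fun x => Sum.inr ((γ : M ≃ₜ M) x))

/-- A compactifying topology on `Γ ⊔ M`: a compact metrizable topology for which the
inclusions of `Γ` (discrete) and `M` are embeddings and the natural `Γ`-action is a
convergence group action. -/
structure IsCompactifyingTopology (Γ : Subgroup (M ≃ₜ M))
    (t : TopologicalSpace (Γ ⊕ M)) : Prop where
  compact : @CompactSpace (Γ ⊕ M) t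
  metrizable : @TopologicalSpace.MetrizableSpace (Γ ⊕ M) t
  isEmbedding_inl : @Topology.IsEmbedding Γ (Γ ⊕ M) ⊥ t Sum.inl
  isEmbedding_inr : @Topology.IsEmbedding M (Γ ⊕ M) _ t Sum.inr
  continuous_action : ∀ γ : Γ, @Continuous (Γ ⊕ M) (Γ ⊕ M) t t (sumAction Γ γ)
  convergence : ∀ γ : ℕ → Γ, Function.Injective γ →
    ∃ (a b : Γ ⊕ M) (φ : ℕ → ℕ), StrictMono φ ∧
      @TendstoLocallyUniformlyOnConst (Γ ⊕ M) (Γ ⊕ M) t t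
        (fun j => sumAction Γ (γ (φ j))) a {b}ᶜ

/-- The distance function of a metric-space structure given as data. -/
def cdist {X : Type*} (m : MetricSpace X) (p q : X) : ℝ := letI := m; dist p q

/-- The topology of a metric-space structure given as data. -/
def ctop {X : Type*} (m : MetricSpace X) : TopologicalSpace X := letI := m; inferInstance

/-- A compatible metric on `Γ ⊔ M`: a metric whose topology is a compactifying topology. -/
def IsCompatibleMetric (Γ : Subgroup (M ≃ₜ M)) (m : MetricSpace (Γ ⊕ M)) : Prop :=
  IsCompactifyingTopology Γ (ctop m)

/-- The shadow `S_ε(γ) = γ (M ∖ B_ε(γ⁻¹))`. -/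
def shadow {Γ : Subgroup (M ≃ₜ M)} (m : MetricSpace (Γ ⊕ M)) (ε : ℝ) (γ : Γ) : Set M :=
  (fun x => (γ : M ≃ₜ M) x) '' {x : M | ε ≤ cdist m (Sum.inr x) (Sum.inl γ⁻¹)}

/-- The `ε`-uniform conical limit set. -/
def uniformConicalLimitSet (Γ : Subgroup (M ≃ₜ M)) (m : MetricSpace (Γ ⊕ M)) (ε : ℝ) :
    Set M :=
  {x | ∃ (a b : M) (γ : ℕ → Γ), ε ≤ cdist m (Sum.inr a) (Sum.inr b) ∧
    Tendsto (fun n => (γ n : M ≃ₜ M) x) atTop (nhds b) ∧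
    ∀ y : M, y ≠ x → Tendsto (fun n => (γ n : M ≃ₜ M) y) atTop (nhds a)}

/-- A `κ`-coarse-cocycle. -/
structure IsCoarseCocycle {Γ : Subgroup (M ≃ₜ M)} (σ : Γ → M → ℝ) (κ : ℝ) : Prop where
  nonneg : 0 ≤ κ
  coarse_cont : ∀ (γ : Γ) (x₀ : M), ∀ ε > 0, ∀ᶠ x in nhds x₀, |σ γ x₀ - σ γ x| < κ + ε
  cocycle : ∀ (γ₁ γ₂ : Γ) (x : M),
    |σ (γ₁ * γ₂) x - (σ γ₁ ((γ₂ : M ≃ₜ M) x) + σ γ₂ x)| ≤ κ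

/-- `γ` is loxodromic with attracting fixed point `p` and repelling fixed point `q`. -/
def IsLoxodromicWith {Γ : Subgroup (M ≃ₜ M)} (γ : Γ) (p q : M) : Prop :=
  p ≠ q ∧ (γ : M ≃ₜ M) p = p ∧ (γ : M ≃ₜ M) q = q ∧
  TendstoLocallyUniformlyOnConst (fun n x => ((γ ^ n : Γ) : M ≃ₜ M) x) p {q}ᶜ ∧
  TendstoLocallyUniformlyOnConst (fun n x => ((γ⁻¹ ^ n : Γ) : M ≃ₜ M) x) q {p}ᶜ

/-- `γ` is parabolic with unique fixed point `p`. -/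
def IsParabolicWith {Γ : Subgroup (M ≃ₜ M)} (γ : Γ) (p : M) : Prop :=
  (γ : M ≃ₜ M) p = p ∧ (∀ q : M, (γ : M ≃ₜ M) q = q → q = p) ∧
  TendstoLocallyUniformlyOnConst (fun n x => ((γ ^ n : Γ) : M ≃ₜ M) x) p {p}ᶜ ∧
  TendstoLocallyUniformlyOnConst (fun n x => ((γ⁻¹ ^ n : Γ) : M ≃ₜ M) x) p {p}ᶜ

/-- A proper coarse-cocycle: `σ(γ_n, γ_n⁺) → +∞` along distinct loxodromic elements
whose fixed-point pairs stay uniformly separated. -/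
def IsProperCocycle {Γ : Subgroup (M ≃ₜ M)} (m : MetricSpace (Γ ⊕ M))
    (σ : Γ → M → ℝ) : Prop :=
  ∀ (γ : ℕ → Γ) (p q : ℕ → M), Function.Injective γ →
    (∀ n, IsLoxodromicWith (γ n) (p n) (q n)) →
    (∃ c > 0, ∀ᶠ n in atTop, c ≤ cdist m (Sum.inr (q n)) (Sum.inr (p n))) →
    Tendsto (fun n => σ (γ n) (p n)) atTop atTop

/-- `σ` is expanding with magnitude function `h = ‖·‖_σ`. -/
def IsExpandingWith {Γ : Subgroup (M ≃ₜ M)} (m : MetricSpace (Γ ⊕ M))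
    (σ : Γ → M → ℝ) (h : Γ → ℝ) : Prop :=
  IsProperCocycle m σ ∧
  ∀ ε > 0, ∃ C > 0, ∀ (γ : Γ) (x : M),
    ε < cdist m (Sum.inr x) (Sum.inl γ⁻¹) → |σ γ x - h γ| ≤ C

/-- An escaping sequence in `Γ`. -/
def IsEscaping {Γ : Subgroup (M ≃ₜ M)} (γ : ℕ → Γ) : Prop :=
  ∀ F : Finset Γ, ∀ᶠ n in atTop, γ n ∉ F

/-- The critical exponent `δ_σ(Γ)` attached to a magnitude function `h = ‖·‖_σ`. -/
noncomputable def critExp {Γ : Subgroup (M ≃ₜ M)} (h : Γ → ℝ) : ℝ :=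
  sInf {s : ℝ | 0 < s ∧ Summable (fun γ : Γ => Real.exp (-s * h γ))}

/-- A `C`-coarse `σ`-Patterson–Sullivan measure of dimension `δ`. -/
def IsCoarsePS [MeasurableSpace M] [BorelSpace M] {Γ : Subgroup (M ≃ₜ M)}
    (σ : Γ → M → ℝ) (C δ : ℝ) (μ : Measure M) : Prop :=
  IsProbabilityMeasure μ ∧ 0 ≤ C ∧
  ∀ γ : Γ,
    Measure.map (γ : M ≃ₜ M) μ ≪ μ ∧ μ ≪ Measure.map (γ : M ≃ₜ M) μ ∧
    ∀ᵐ x ∂μ,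
      Real.exp (-C - δ * σ γ⁻¹ x) ≤ ((Measure.map (γ : M ≃ₜ M) μ).rnDeriv μ x).toReal ∧
      ((Measure.map (γ : M ≃ₜ M) μ).rnDeriv μ x).toReal ≤ Real.exp (C - δ * σ γ⁻¹ x)

/-- A coarse `σ`-Patterson–Sullivan measure of dimension `δ` (for some constant `C`). -/
def IsCoarsePSDim [MeasurableSpace M] [BorelSpace M] {Γ : Subgroup (M ≃ₜ M)}
    (σ : Γ → M → ℝ) (δ : ℝ) (μ : Measure M) : Prop :=
  ∃ C : ℝ, IsCoarsePS σ C δ μ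

/-- A `κ`-coarse Gromov–Patterson–Sullivan system `(σ, σ̄, G)`. -/
structure IsCoarseGPS {Γ : Subgroup (M ≃ₜ M)} (m : MetricSpace (Γ ⊕ M))
    (σ σb : Γ → M → ℝ) (G : M → M → ℝ) (κ : ℝ) : Prop where
  cocycle : IsCoarseCocycle σ κ
  cocycle_bar : IsCoarseCocycle σb κ
  proper : IsProperCocycle m σ
  proper_bar : IsProperCocycle m σb
  locBounded : ∀ x y : M, x ≠ y → ∃ (U V : Set M) (B : ℝ),
    IsOpen U ∧ IsOpen V ∧ x ∈ U ∧ y ∈ V ∧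
    ∀ x' ∈ U, ∀ y' ∈ V, x' ≠ y' → |G x' y'| ≤ B
  compat : ∀ (γ : Γ) (x y : M), x ≠ y →
    |(σb γ x + σ γ y) - (G ((γ : M ≃ₜ M) x) ((γ : M ≃ₜ M) y) - G x y)| ≤ κ

/-- The diagonal action of `Γ` on `M × M`. -/
def prodAct {Γ : Subgroup (M ≃ₜ M)} (γ : Γ) : M × M → M × M :=
  fun p => ((γ : M ≃ₜ M) p.1, (γ : M ≃ₜ M) p.2)

/-- `M^{(2)}`, the set of pairs of distinct points. -/
def offDiag2 (M : Type*) : Set (M × M) := {p : M × M | p.1 ≠ p.2}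

noncomputable def clampF (k : ℕ) (t : ℝ) : ℝ := min 1 (max 0 (2 - 2^k * t))

lemma clampF_nonneg (k : ℕ) (t : ℝ) : 0 ≤ clampF k t := le_min one_pos.le (le_max_left _ _)

lemma clampF_le_one (k : ℕ) (t : ℝ) : clampF k t ≤ 1 := min_le_left _ _

lemma clampF_eq_zero {k : ℕ} {t : ℝ} (h : 2 ≤ 2^k * t) : clampF k t = 0 := by
  have : max 0 (2 - 2^k * t) = 0 := max_eq_left (by linarith)
  simp [clampF, this]

lemma clampF_eq_one {k : ℕ} {t : ℝ} (h : (2:ℝ)^k * t ≤ 1) : clampF k t = 1 := by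
  have h2 : (1:ℝ) ≤ 2 - 2^k * t := by linarith
  have : max 0 (2 - 2^k * t) = 2 - 2^k * t := max_eq_right (by linarith)
  simp only [clampF, this]
  exact min_eq_left h2

lemma clampF_antitone {k : ℕ} {t t' : ℝ} (h : t ≤ t') : clampF k t' ≤ clampF k t := by
  have hk : (0:ℝ) ≤ 2^k := by positivity
  have : 2 - 2^k * t' ≤ 2 - 2^k * t := by nlinarith
  exact min_le_min le_rfl (max_le_max le_rfl this)

lemma clampF_lip (k : ℕ) (t t' : ℝ) : clampF k t ≤ clampF k t' + 2^k * |t - t'| := by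
  have hk : (0:ℝ) ≤ 2^k := by positivity
  have h1 : 2^k * t' - 2^k * t ≤ 2^k * |t - t'| := by
    have := abs_sub_abs_le_abs_sub t' t
    have h2 : t' - t ≤ |t - t'| := by rw [abs_sub_comm]; exact le_abs_self _
    nlinarith
  rcases le_or_gt (clampF k t) (clampF k t') with h | h
  · nlinarith [clampF_nonneg k t, clampF_nonneg k t', abs_nonneg (t - t')]
  · -- clampF k t > clampF k t' : so clampF k t' < 1, hence = max 0 (2 - 2^k t')
    have ht' : clampF k t' = max 0 (2 - 2^k * t') := by
      rcases le_or_gt 1 (max 0 (2 - 2^k * t')) with hh | hh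
      · have : clampF k t' = 1 := min_eq_left hh
        exact absurd (this ▸ h) (not_lt.2 (clampF_le_one k t))
      · exact min_eq_right hh.le
    have hx : clampF k t ≤ max 0 (2 - 2^k * t) := min_le_right _ _
    rw [ht']
    rcases le_or_gt (2 - 2^k * t) 0 with hz | hz
    · have : max 0 (2 - 2^k * t) = 0 := max_eq_left hz
      nlinarith [le_max_left (0:ℝ) (2 - 2^k * t'), abs_nonneg (t - t')]
    · have : max 0 (2 - 2^k * t) = 2 - 2^k * t := max_eq_right hz.le
      have h3 : (2:ℝ) - 2^k * t ≤ (2 - 2^k * t') + 2^k * |t - t'| := by nlinarith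
      calc clampF k t ≤ 2 - 2^k * t := this ▸ hx
        _ ≤ (2 - 2^k * t') + 2^k * |t - t'| := h3
        _ ≤ max 0 (2 - 2^k * t') + 2^k * |t - t'| := by
            have := le_max_right (0:ℝ) (2 - 2^k * t')
            linarith

noncomputable def psiF (c : ℕ → ℝ) (t : ℝ) : ℝ :=
  2 * c 5 + 2 * ⨆ k : ℕ, ((c (k+5) - c 5) * clampF k t)

section psi
variable {c : ℕ → ℝ} (hc : Monotone c)

include hc

lemma psi_bdd {t : ℝ} (ht : 0 < t) :
    BddAbove (Set.range fun k : ℕ => (c (k+5) - c 5) * clampF k t) := by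
  obtain ⟨K, hK⟩ : ∃ K : ℕ, 2/t < 2^K := pow_unbounded_of_one_lt _ one_lt_two
  refine ⟨c (K+5) - c 5, ?_⟩
  rintro x ⟨k, rfl⟩
  have hck : 0 ≤ c (k+5) - c 5 := sub_nonneg.2 (hc (by omega))
  rcases le_or_gt k K with hkK | hkK
  · calc (c (k+5) - c 5) * clampF k t ≤ (c (k+5) - c 5) * 1 :=
        mul_le_mul_of_nonneg_left (clampF_le_one k t) hck
      _ ≤ c (K+5) - c 5 := by
          rw [mul_one]; exact sub_le_sub_right (hc (by omega)) _
  · have h2 : (2:ℝ) ≤ 2^k * t := by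
      have : (2:ℝ)^K ≤ 2^k := pow_le_pow_right₀ one_le_two hkK.le
      have h3 : 2/t < 2^k := lt_of_lt_of_le hK this
      rw [div_lt_iff₀ ht] at h3
      linarith
    show (c (k+5) - c 5) * clampF k t ≤ _
    rw [clampF_eq_zero h2, mul_zero]
    exact sub_nonneg.2 (hc (by omega))

lemma psi_sup_nonneg {t : ℝ} (ht : 0 < t) :
    0 ≤ ⨆ k : ℕ, ((c (k+5) - c 5) * clampF k t) := by
  have h0 : (c (0+5) - c 5) * clampF 0 t = (c 5 - c 5) * clampF 0 t := rfl
  have := le_ciSup (psi_bdd hc ht) 0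
  rw [h0] at this
  simpa using this

lemma psi_ge_base {t : ℝ} (ht : 0 < t) : 2 * c 5 ≤ psiF c t := by
  have := psi_sup_nonneg hc ht
  unfold psiF; linarith

lemma psi_nonneg (hc5 : 0 ≤ c 5) {t : ℝ} (ht : 0 < t) : 0 ≤ psiF c t :=
  le_trans (by linarith) (psi_ge_base hc ht)

lemma psi_antitone {t t' : ℝ} (ht : 0 < t) (htt' : t ≤ t') : psiF c t' ≤ psiF c t := by
  have ht' : 0 < t' := lt_of_lt_of_le ht htt'
  unfold psiF
  have : (⨆ k : ℕ, ((c (k+5) - c 5) * clampF k t')) ≤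
      ⨆ k : ℕ, ((c (k+5) - c 5) * clampF k t) := by
    refine ciSup_le fun k => le_trans ?_ (le_ciSup (psi_bdd hc ht) k)
    exact mul_le_mul_of_nonneg_left (clampF_antitone htt') (sub_nonneg.2 (hc (by omega)))
  linarith

/-- if `(1/2)^k₁ < t` and no smaller exponent works then `2 c k₁ ≤ psiF c t`. -/
lemma psi_ge {t : ℝ} (ht : 0 < t) {k₁ : ℕ}
    (hmin : ∀ j < k₁, ¬ ((1/2:ℝ)^j < t)) : 2 * c k₁ ≤ psiF c t := by
  rcases le_or_gt k₁ 5 with h5 | h5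
  · have : c k₁ ≤ c 5 := hc h5
    have := psi_ge_base hc ht
    linarith
  · set k := k₁ - 5 with hk
    have hkk : k + 5 = k₁ := by omega
    have hkl : k < k₁ := by omega
    have hle : t ≤ (1/2:ℝ)^k := not_lt.1 (hmin k hkl)
    have hclamp : clampF k t = 1 := by
      apply clampF_eq_one
      have h2k : (0:ℝ) < 2^k := by positivity
      have : (2:ℝ)^k * (1/2:ℝ)^k = 1 := by
        rw [← mul_pow]; norm_num
      nlinarith
    have hterm : (c (k+5) - c 5) * clampF k t = c k₁ - c 5 := by rw [hclamp, hkk, mul_one]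
    have := le_ciSup (psi_bdd hc ht) k
    rw [hterm] at this
    unfold psiF; linarith

lemma psi_lip {s : ℝ} (hs : 0 < s) :
    ∃ Λ : ℝ, 0 ≤ Λ ∧ ∀ t t' : ℝ, s ≤ t → s ≤ t' → psiF c t ≤ psiF c t' + Λ * |t - t'| := by
  obtain ⟨K, hK⟩ : ∃ K : ℕ, 2/s < 2^K := pow_unbounded_of_one_lt _ one_lt_two
  refine ⟨2 * ((max 0 (c (K+5) - c 5)) * 2^K), by positivity, fun t t' hst hst' => ?_⟩
  have ht : 0 < t := lt_of_lt_of_le hs hst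
  have ht' : 0 < t' := lt_of_lt_of_le hs hst'
  unfold psiF
  have key : (⨆ k : ℕ, ((c (k+5) - c 5) * clampF k t)) ≤
      (⨆ k : ℕ, ((c (k+5) - c 5) * clampF k t')) + (max 0 (c (K+5) - c 5)) * 2^K * |t - t'| := by
    refine ciSup_le fun k => ?_
    have hck : 0 ≤ c (k+5) - c 5 := sub_nonneg.2 (hc (by omega))
    rcases le_or_gt k K with hkK | hkK
    · have h1 : (c (k+5) - c 5) * clampF k t ≤
          (c (k+5) - c 5) * clampF k t' + (c (k+5) - c 5) * (2^k * |t - t'|) := by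
        have := clampF_lip k t t'
        nlinarith
      have h2 : (c (k+5) - c 5) * clampF k t' ≤ ⨆ k : ℕ, ((c (k+5) - c 5) * clampF k t') :=
        le_ciSup (psi_bdd hc ht') k
      have h3 : (c (k+5) - c 5) * (2^k * |t - t'|) ≤
          (max 0 (c (K+5) - c 5)) * 2^K * |t - t'| := by
        have hcK : c (k+5) - c 5 ≤ max 0 (c (K+5) - c 5) :=
          le_trans (sub_le_sub_right (hc (by omega)) _) (le_max_right _ _)
        have hpk : (2:ℝ)^k ≤ 2^K := pow_le_pow_right₀ one_le_two hkK
        have habs : 0 ≤ |t - t'| := abs_nonneg _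
        have hmax : 0 ≤ max 0 (c (K+5) - c 5) := le_max_left _ _
        have h4 : (c (k+5) - c 5) * (2^k * |t - t'|) ≤
            (max 0 (c (K+5) - c 5)) * (2^K * |t - t'|) := by
          apply mul_le_mul hcK (by nlinarith) (by positivity) hmax
        nlinarith
      linarith
    · have h2t : (2:ℝ) ≤ 2^k * t := by
        have : (2:ℝ)^K ≤ 2^k := pow_le_pow_right₀ one_le_two hkK.le
        have h3 : 2/s < 2^k := lt_of_lt_of_le hK this
        rw [div_lt_iff₀ hs] at h3
        nlinarith [pow_pos (two_pos (α := ℝ)) k]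
      rw [clampF_eq_zero h2t, mul_zero]
      have := psi_sup_nonneg hc ht'
      positivity
  nlinarith [abs_nonneg (t - t'), pow_pos (two_pos (α := ℝ)) K,
    le_max_left (0:ℝ) (c (K+5) - c 5)]
end psi

/-! ### Auxiliary lemmas for the proof -/

section TLUOCLemmas

variable {X Y : Type*} [TopologicalSpace X] [TopologicalSpace Y]

lemma tluoc_eval {F : ℕ → X → Y} {a : Y} {S : Set X}
    (h : TendstoLocallyUniformlyOnConst F a S) {x : X} (hx : x ∈ S) :
    Tendsto (fun n => F n x) atTop (nhds a) := by
  rw [Filter.tendsto_def]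
  intro U hU
  obtain ⟨V, hV, hev⟩ := h U hU x hx
  obtain ⟨O, hO, hxO, hOV⟩ := mem_nhdsWithin.1 hV
  have hxV : x ∈ V := hOV ⟨hxO, hx⟩
  filter_upwards [hev] with n hn
  exact hn x hxV

lemma tluoc_moving {F : ℕ → X → Y} {a : Y} {S : Set X}
    (hS : IsOpen S) (h : TendstoLocallyUniformlyOnConst F a S) {w : X} (hw : w ∈ S)
    {u : ℕ → X} (hu : Tendsto u atTop (nhds w)) :
    Tendsto (fun n => F n (u n)) atTop (nhds a) := by
  rw [Filter.tendsto_def]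
  intro U hU
  obtain ⟨V, hV, hev⟩ := h U hU w hw
  have hVn : V ∈ nhds w := by
    rw [← nhdsWithin_eq_nhds.2 (hS.mem_nhds hw)]
    exact hV
  filter_upwards [hev, hu hVn] with n hn hun
  exact hn _ hun

lemma tluoc_subseq {F : ℕ → X → Y} {a : Y} {S : Set X}
    (h : TendstoLocallyUniformlyOnConst F a S) {φ : ℕ → ℕ} (hφ : StrictMono φ) :
    TendstoLocallyUniformlyOnConst (fun j => F (φ j)) a S := by
  intro U hU x hx
  obtain ⟨V, hV, hev⟩ := h U hU x hx
  exact ⟨V, hV, hφ.tendsto_atTop.eventually hev⟩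

end TLUOCLemmas

section GroupLemmas

variable {M : Type*} [MetricSpace M] [CompactSpace M] {Γ : Subgroup (M ≃ₜ M)}

lemma homeo_mul_apply (γ₁ γ₂ : Γ) (y : M) :
    ((γ₁ * γ₂ : Γ) : M ≃ₜ M) y = (γ₁ : M ≃ₜ M) ((γ₂ : M ≃ₜ M) y) := rfl

lemma homeo_inv_apply (γ : Γ) (y : M) :
    ((γ⁻¹ : Γ) : M ≃ₜ M) ((γ : M ≃ₜ M) y) = y := by
  have h1 : ((γ⁻¹ : Γ) : M ≃ₜ M) = ((γ : M ≃ₜ M))⁻¹ := rfl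
  rw [h1]
  exact ((γ : M ≃ₜ M)).symm_apply_apply y

lemma sumAction_inl (γ δ : Γ) : sumAction Γ γ (Sum.inl δ) = Sum.inl (γ * δ) := rfl

lemma sumAction_inr (γ : Γ) (y : M) : sumAction Γ γ (Sum.inr y) = Sum.inr ((γ : M ≃ₜ M) y) := rfl

lemma sumAction_inv_cancel (γ : Γ) (z : Γ ⊕ M) :
    sumAction Γ γ (sumAction Γ γ⁻¹ z) = z := by
  cases z with
  | inl δ => simp [sumAction]
  | inr y =>
    show Sum.inr ((γ : M ≃ₜ M) (((γ⁻¹ : Γ) : M ≃ₜ M) y)) = Sum.inr y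
    congr 1
    have h1 : ((γ⁻¹ : Γ) : M ≃ₜ M) = ((γ : M ≃ₜ M))⁻¹ := rfl
    rw [h1]
    exact ((γ : M ≃ₜ M)).apply_symm_apply y

lemma sumAction_inv_cancel' (γ : Γ) (z : Γ ⊕ M) :
    sumAction Γ γ⁻¹ (sumAction Γ γ z) = z := by
  have := sumAction_inv_cancel (Γ := Γ) γ⁻¹ z
  rwa [inv_inv] at this

end GroupLemmas
set_option maxHeartbeats 1000000 in
/-- Lemma 4.2: there is a choice of magnitude behaving like a Busemann
cocycle: for `x ∈ Λ(Γ)` and `α ∈ Γ`,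
`limsup_{γ → x} |σ(α,x) - (‖αγ‖_σ - ‖γ‖_σ)| ≤ 2κ`; consequently, for any choice of
magnitude the corresponding limsup is bounded by a uniform constant. -/
theorem nice_magnitude
    {M : Type*} [MetricSpace M] [CompactSpace M]
    {Γ : Subgroup (M ≃ₜ M)} (hΓ : IsConvergenceGroup Γ) (hNE : IsNonElementary Γ)
    (m : MetricSpace (Γ ⊕ M)) (hm : IsCompatibleMetric Γ m)
    (σ : Γ → M → ℝ) (κ : ℝ) (hσ : IsCoarseCocycle σ κ)
    (hexp : ∃ h₀ : Γ → ℝ, IsExpandingWith m σ h₀) :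
    -- there is a good choice of magnitude
    (∃ h : Γ → ℝ, IsExpandingWith m σ h ∧
      ∀ (α : Γ) (x : M), x ∈ limitSet Γ → ∀ ε : ℝ, 0 < ε →
        ∃ U ∈ @nhds _ (ctop m) (Sum.inr x : Γ ⊕ M), ∀ γ : Γ, (Sum.inl γ : Γ ⊕ M) ∈ U →
          |σ α x - (h (α * γ) - h γ)| ≤ 2 * κ + ε) ∧
    -- hence for any choice of magnitude, a uniform bound holds
    (∀ h' : Γ → ℝ, IsExpandingWith m σ h' →
      ∃ C > 0, ∀ (α : Γ) (x : M), x ∈ limitSet Γ →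
        ∃ U ∈ @nhds _ (ctop m) (Sum.inr x : Γ ⊕ M), ∀ γ : Γ, (Sum.inl γ : Γ ⊕ M) ∈ U →
          |σ α x - (h' (α * γ) - h' γ)| ≤ C) := by
  classical
  obtain ⟨h₀, hprop, hexpand⟩ := hexp
  letI : MetricSpace (Γ ⊕ M) := m
  haveI : CompactSpace (Γ ⊕ M) := hm.compact
  have hembr : Topology.IsEmbedding (Sum.inr : M → Γ ⊕ M) := hm.isEmbedding_inr
  -- two distinct points of M
  obtain ⟨p₁, p₂, hp₁Λ, hp₂Λ, hp12⟩ :=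
    Set.one_lt_encard_iff.1 (lt_of_lt_of_le (by norm_num) hNE)
  haveI : Nonempty M := ⟨p₁⟩
  set δ₀ : ℝ := dist (Sum.inr p₁ : Γ ⊕ M) (Sum.inr p₂) with hδ₀def
  have hδ₀pos : 0 < δ₀ := dist_pos.2 (fun h => hp12 (Sum.inr.inj h))
  set ε₀ : ℝ := δ₀ / 3 with hε₀def
  have hε₀pos : 0 < ε₀ := by positivity
  clear_value δ₀ ε₀
  have htwo : ∀ ζ : Γ ⊕ M,
      ε₀ < dist (Sum.inr p₁ : Γ ⊕ M) ζ ∨ ε₀ < dist (Sum.inr p₂ : Γ ⊕ M) ζ := by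
    intro ζ
    by_contra hcon
    push_neg at hcon
    have h1 := dist_triangle (Sum.inr p₁ : Γ ⊕ M) ζ (Sum.inr p₂)
    have h2 := dist_comm (Sum.inr p₂ : Γ ⊕ M) ζ
    rw [hε₀def] at hcon
    have := hcon.1
    have := hcon.2
    rw [h2] at this
    rw [hδ₀def] at *
    linarith
  -- expansion constants at dyadic scales
  have hc0 : ∀ k : ℕ, ∃ C : ℝ, 0 < C ∧ ∀ (γ : Γ) (y : M),
      (1/2:ℝ)^k < dist (Sum.inr y : Γ ⊕ M) (Sum.inl γ⁻¹) → |σ γ y - h₀ γ| ≤ C := by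
    intro k
    obtain ⟨C, hC, hspec⟩ := hexpand ((1/2:ℝ)^k) (by positivity)
    exact ⟨C, hC, fun γ y hy => hspec γ y hy⟩
  choose c₀ hc₀ using hc0
  set c : ℕ → ℝ := fun k => ((k : ℝ) + 1) + ∑ j ∈ Finset.range (k+1), c₀ j with hcdef
  have hcmono : Monotone c := by
    intro a b hab
    simp only [hcdef]
    have h1 : ((a:ℝ) + 1) ≤ ((b:ℝ) + 1) := by
      have : (a:ℝ) ≤ b := by exact_mod_cast hab
      linarith
    have h2 : ∑ j ∈ Finset.range (a+1), c₀ j ≤ ∑ j ∈ Finset.range (b+1), c₀ j :=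
      Finset.sum_le_sum_of_subset_of_nonneg (Finset.range_subset_range.2 (by omega))
        (fun j _ _ => (hc₀ j).1.le)
    linarith
  have hc_ge : ∀ k : ℕ, (k : ℝ) + 1 ≤ c k := by
    intro k
    simp only [hcdef]
    have : (0:ℝ) ≤ ∑ j ∈ Finset.range (k+1), c₀ j :=
      Finset.sum_nonneg (fun j _ => (hc₀ j).1.le)
    linarith
  have hc_exp : ∀ (k : ℕ) (γ : Γ) (y : M),
      (1/2:ℝ)^k < dist (Sum.inr y : Γ ⊕ M) (Sum.inl γ⁻¹) → |σ γ y - h₀ γ| ≤ c k := by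
    intro k γ y hy
    refine le_trans ((hc₀ k).2 γ y hy) ?_
    simp only [hcdef]
    have h1 : c₀ k ≤ ∑ j ∈ Finset.range (k+1), c₀ j :=
      Finset.single_le_sum (fun j _ => (hc₀ j).1.le) (Finset.self_mem_range_succ k)
    have : (0:ℝ) ≤ (k:ℝ) + 1 := by positivity
    linarith
  clear_value c
  -- the magnitude function
  set nrm : Γ → ℝ := fun γ =>
    ⨆ y : M, (σ γ y - psiF c (dist (Sum.inr y : Γ ⊕ M) (Sum.inl γ⁻¹))) with hnrmdef
  have hnrm_eq : ∀ γ₀ : Γ, nrm γ₀ =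
      ⨆ z : M, (σ γ₀ z - psiF c (dist (Sum.inr z : Γ ⊕ M) (Sum.inl γ₀⁻¹))) := by
    intro γ₀; rw [hnrmdef]
  clear_value nrm
  have hdistpos : ∀ (γ : Γ) (y : M), 0 < dist (Sum.inr y : Γ ⊕ M) (Sum.inl γ⁻¹) :=
    fun γ y => dist_pos.2 Sum.inr_ne_inl
  -- H0 : basic upper bound
  have H0 : ∀ (γ : Γ) (y : M),
      σ γ y - h₀ γ ≤ psiF c (dist (Sum.inr y : Γ ⊕ M) (Sum.inl γ⁻¹)) / 2 := by
    intro γ y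
    have ht : 0 < dist (Sum.inr y : Γ ⊕ M) (Sum.inl γ⁻¹) := hdistpos γ y
    have hex : ∃ k : ℕ, (1/2:ℝ)^k < dist (Sum.inr y : Γ ⊕ M) (Sum.inl γ⁻¹) :=
      exists_pow_lt_of_lt_one ht (by norm_num)
    have hk₁ := Nat.find_spec hex
    have hmin : ∀ j < Nat.find hex, ¬ ((1/2:ℝ)^j < dist (Sum.inr y : Γ ⊕ M) (Sum.inl γ⁻¹)) :=
      fun j hj => Nat.find_min hex hj
    have h1 := hc_exp (Nat.find hex) γ y hk₁
    have h2 : 2 * c (Nat.find hex) ≤ psiF c (dist (Sum.inr y : Γ ⊕ M) (Sum.inl γ⁻¹)) :=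
      psi_ge hcmono ht hmin
    have := (abs_le.1 h1).2
    linarith
  have hΨnn : ∀ t : ℝ, 0 < t → 0 ≤ psiF c t := by
    intro t ht
    have h5 : (0:ℝ) ≤ c 5 := le_trans (by norm_num) (hc_ge 5)
    have := psi_ge_base hcmono ht
    linarith
  have hbdd : ∀ β : Γ, BddAbove (Set.range fun y : M =>
      σ β y - psiF c (dist (Sum.inr y : Γ ⊕ M) (Sum.inl β⁻¹))) := by
    intro β
    refine ⟨h₀ β, ?_⟩
    rintro _ ⟨y, rfl⟩
    have h1 := H0 β y
    have h2 := hΨnn _ (hdistpos β y)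
    simp only
    linarith
  have hle : ∀ β : Γ, nrm β ≤ h₀ β := by
    intro β
    simp only [hnrmdef]
    refine ciSup_le fun y => ?_
    have h1 := H0 β y
    have h2 := hΨnn _ (hdistpos β y)
    linarith
  -- lower bound
  have hexε₀ : ∃ k : ℕ, (1/2:ℝ)^k < ε₀ := exists_pow_lt_of_lt_one hε₀pos (by norm_num)
  set k₀ : ℕ := Nat.find hexε₀ with hk₀def
  have hk₀spec : (1/2:ℝ)^k₀ < ε₀ := Nat.find_spec hexε₀
  clear_value k₀
  set K₀ : ℝ := c k₀ + psiF c ε₀ with hK₀def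
  have hK₀nn : 0 ≤ K₀ := by
    have h1 : (0:ℝ) ≤ c k₀ := le_trans (by positivity) (hc_ge k₀)
    have h2 := hΨnn ε₀ hε₀pos
    simp only [hK₀def]; linarith
  clear_value K₀
  have hge : ∀ β : Γ, h₀ β - K₀ ≤ nrm β := by
    intro β
    have hcase := htwo (Sum.inl β⁻¹ : Γ ⊕ M)
    have key : ∀ q : M, ε₀ < dist (Sum.inr q : Γ ⊕ M) (Sum.inl β⁻¹) → h₀ β - K₀ ≤ nrm β := by
      intro q hq
      have h1 : |σ β q - h₀ β| ≤ c k₀ := hc_exp k₀ β q (lt_trans hk₀spec hq)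
      have h2 : psiF c (dist (Sum.inr q : Γ ⊕ M) (Sum.inl β⁻¹)) ≤ psiF c ε₀ :=
        psi_antitone hcmono hε₀pos hq.le
      have h3 : σ β q - psiF c (dist (Sum.inr q : Γ ⊕ M) (Sum.inl β⁻¹)) ≤ nrm β := by
        simp only [hnrmdef]
        exact le_ciSup (hbdd β) q
      have := (abs_le.1 h1).1
      simp only [hK₀def]
      linarith
    rcases hcase with h | h
    · exact key p₁ h
    · exact key p₂ h
  -- nrm is an expanding magnitude
  have habs : ∀ β : Γ, |nrm β - h₀ β| ≤ K₀ := by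
    intro β
    rw [abs_le]
    constructor
    · have := hge β; linarith
    · have := hle β; linarith
  have hexpnrm : IsExpandingWith m σ nrm := by
    refine ⟨hprop, fun ε hε => ?_⟩
    obtain ⟨C, hC, hspec⟩ := hexpand ε hε
    refine ⟨C + K₀, by linarith, fun γ y hy => ?_⟩
    have h1 := hspec γ y hy
    have h2 := habs γ
    calc |σ γ y - nrm γ| = |(σ γ y - h₀ γ) + (h₀ γ - nrm γ)| := by ring_nf
      _ ≤ |σ γ y - h₀ γ| + |h₀ γ - nrm γ| := abs_add_le _ _
      _ ≤ C + K₀ := by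
          rw [abs_sub_comm (h₀ γ)]
          linarith
  -- location of approximate maximizers
  set M₀ : ℕ := ⌈K₀⌉₊ + 1 with hM₀def
  set τ : ℝ := (1/2:ℝ)^M₀ with hτdef
  have hτpos : 0 < τ := by rw [hτdef]; positivity
  have H4 : ∀ (β : Γ) (y : M),
      nrm β - 1 ≤ σ β y - psiF c (dist (Sum.inr y : Γ ⊕ M) (Sum.inl β⁻¹)) →
      τ < dist (Sum.inr y : Γ ⊕ M) (Sum.inl β⁻¹) := by
    intro β y hy
    have ht : 0 < dist (Sum.inr y : Γ ⊕ M) (Sum.inl β⁻¹) := hdistpos β y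
    have hex : ∃ k : ℕ, (1/2:ℝ)^k < dist (Sum.inr y : Γ ⊕ M) (Sum.inl β⁻¹) :=
      exists_pow_lt_of_lt_one ht (by norm_num)
    have hk₁ := Nat.find_spec hex
    have hmin : ∀ j < Nat.find hex, ¬ ((1/2:ℝ)^j < dist (Sum.inr y : Γ ⊕ M) (Sum.inl β⁻¹)) :=
      fun j hj => Nat.find_min hex hj
    have h1 := hc_exp (Nat.find hex) β y hk₁
    have h2 : 2 * c (Nat.find hex) ≤ psiF c (dist (Sum.inr y : Γ ⊕ M) (Sum.inl β⁻¹)) :=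
      psi_ge hcmono ht hmin
    have h3 := hge β
    have h5 : c (Nat.find hex) ≤ K₀ + 1 := by
      have := (abs_le.1 h1).2
      linarith
    have h6 : ((Nat.find hex : ℝ)) ≤ K₀ := by
      have := hc_ge (Nat.find hex)
      linarith
    have h7 : Nat.find hex ≤ ⌈K₀⌉₊ := by
      have h8 : ((Nat.find hex : ℝ)) ≤ (⌈K₀⌉₊ : ℝ) := le_trans h6 (Nat.le_ceil K₀)
      exact_mod_cast h8
    have h9 : Nat.find hex < M₀ := by rw [hM₀def]; omega
    calc τ = (1/2:ℝ)^M₀ := hτdef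
      _ < (1/2:ℝ)^(Nat.find hex) := pow_lt_pow_right_of_lt_one₀ (by norm_num) (by norm_num) h9
      _ < _ := hk₁
  obtain ⟨Λ, hΛnn, hΛ⟩ := psi_lip hcmono (s := τ/2) (by linarith)
  clear_value M₀ τ
  -- THE MAIN SEQUENTIAL LEMMA
  have hmain : ∀ (α : Γ) (x : M) (ε : ℝ), 0 < ε → ∀ gs : ℕ → Γ,
      Tendsto (fun n => (Sum.inl (gs n) : Γ ⊕ M)) atTop (nhds (Sum.inr x)) →
      ∃ n, |σ α x - (nrm (α * gs n) - nrm (gs n))| ≤ 2 * κ + ε := by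
    intro α x ε hε gs hgs
    set ε' : ℝ := min 1 (ε/4) with hε'def
    have hε'pos : 0 < ε' := by rw [hε'def]; positivity
    have hε'le1 : ε' ≤ 1 := min_le_left _ _
    have hε'leε : ε' ≤ ε/4 := min_le_right _ _
    clear_value ε'
    -- fibers of gs are finite
    have hfib : ∀ β : Γ, {n | gs n = β}.Finite := by
      intro β
      by_contra hinf
      have hfreq : ∃ᶠ n in atTop, gs n = β := Nat.frequently_atTop_iff_infinite.2 hinf
      have hball : ∀ r : ℝ, 0 < r → dist (Sum.inl β : Γ ⊕ M) (Sum.inr x) ≤ r := by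
        intro r hr
        have hev : ∀ᶠ n in atTop, dist (Sum.inl (gs n) : Γ ⊕ M) (Sum.inr x) < r :=
          Metric.tendsto_nhds.1 hgs r hr
        obtain ⟨n, hn1, hn2⟩ := (hfreq.and_eventually hev).exists
        rw [hn1] at hn2
        exact hn2.le
      exact Sum.inl_ne_inr (eq_of_forall_dist_le hball)
    -- the range of gs is infinite
    have hinf : (Set.range gs).Infinite := by
      intro hfin
      have hsub : (Set.univ : Set ℕ) ⊆ ⋃ β ∈ Set.range gs, {n | gs n = β} := by
        intro n _
        exact Set.mem_biUnion (Set.mem_range_self n) rfl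
      exact Set.infinite_univ ((hfin.biUnion (fun β _ => hfib β)).subset hsub)
    -- injective enumeration of the range, still converging to x
    set e : ℕ → Γ := fun n => ((hinf.natEmbedding) n : Γ) with hedef
    have he_inj : Function.Injective e := by
      intro a b hab
      have := (hinf.natEmbedding).injective (Subtype.ext hab)
      exact this
    have he_mem : ∀ n, e n ∈ Set.range gs := fun n => ((hinf.natEmbedding) n).2
    have he_tendsto : Tendsto (fun n => (Sum.inl (e n) : Γ ⊕ M)) atTop (nhds (Sum.inr x)) := by
      rw [Metric.tendsto_nhds]
      intro r hr
      have hev : ∀ᶠ n in atTop, dist (Sum.inl (gs n) : Γ ⊕ M) (Sum.inr x) < r :=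
        Metric.tendsto_nhds.1 hgs r hr
      obtain ⟨N, hN⟩ := eventually_atTop.1 hev
      have hTfin : (Set.range gs ∩
          {β : Γ | r ≤ dist (Sum.inl β : Γ ⊕ M) (Sum.inr x)}).Finite := by
        apply Set.Finite.subset ((Set.finite_Iio N).image gs)
        rintro β ⟨⟨n, rfl⟩, hβ⟩
        refine ⟨n, ?_, rfl⟩
        simp only [Set.mem_Iio]
        by_contra hn
        push_neg at hn
        exact absurd (hN n hn) (not_lt.2 hβ)
      have hpre : (e ⁻¹' (Set.range gs ∩
          {β : Γ | r ≤ dist (Sum.inl β : Γ ⊕ M) (Sum.inr x)})).Finite :=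
        Set.Finite.preimage (Set.injOn_of_injective he_inj) hTfin
      rw [← Nat.cofinite_eq_atTop]
      filter_upwards [hpre.eventually_cofinite_notMem] with j hj
      by_contra hlt
      push_neg at hlt
      exact hj ⟨he_mem j, hlt⟩
    clear_value e
    -- convergence group dynamics
    obtain ⟨a, bb, φ₂, hφ₂, hTL0⟩ := hm.convergence e he_inj
    have hTL : TendstoLocallyUniformlyOnConst
        (fun j => sumAction Γ (e (φ₂ j))) a {bb}ᶜ := hTL0
    obtain ⟨a₂, b₂, φ₃, hφ₃, hGL0⟩ := hm.convergence (fun j => (e (φ₂ j))⁻¹)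
      (fun i j hij => hφ₂.injective (he_inj (inv_injective hij)))
    set ω : ℕ → Γ := fun j => e (φ₂ (φ₃ j)) with hωdef
    have hω_mem : ∀ j, ω j ∈ Set.range gs := fun j => he_mem _
    have hF : TendstoLocallyUniformlyOnConst (fun j => sumAction Γ (ω j)) a {bb}ᶜ :=
      tluoc_subseq hTL hφ₃
    have hG : TendstoLocallyUniformlyOnConst
        (fun j => sumAction Γ (ω j)⁻¹) a₂ {b₂}ᶜ := hGL0
    have hω_tendsto : Tendsto (fun j => (Sum.inl (ω j) : Γ ⊕ M)) atTop (nhds (Sum.inr x)) :=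
      he_tendsto.comp ((hφ₂.comp hφ₃).tendsto_atTop)
    -- swap lemma: a₂ = bb
    have ha₂ : a₂ = bb := by
      by_contra hne
      have key : ∀ z : Γ ⊕ M, z ≠ b₂ → z = a := by
        intro z hz
        have h1 : Tendsto (fun j => sumAction Γ (ω j)⁻¹ z) atTop (nhds a₂) :=
          tluoc_eval hG hz
        have h2 : Tendsto (fun j => sumAction Γ (ω j) (sumAction Γ (ω j)⁻¹ z))
            atTop (nhds a) :=
          tluoc_moving isOpen_compl_singleton hF hne h1
        have h3 : (fun j => sumAction Γ (ω j) (sumAction Γ (ω j)⁻¹ z)) = fun _ => z :=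
          funext fun j => sumAction_inv_cancel _ _
        rw [h3] at h2
        exact (tendsto_nhds_unique tendsto_const_nhds h2)
      have d1 : (Sum.inr p₁ : Γ ⊕ M) ≠ Sum.inr p₂ := fun h => hp12 (Sum.inr.inj h)
      rcases eq_or_ne (Sum.inr p₁ : Γ ⊕ M) b₂ with h1 | h1
      · have e2 := key (Sum.inr p₂) (by rw [← h1]; exact d1.symm)
        have e3 := key (Sum.inl 1) (by rw [← h1]; exact Sum.inl_ne_inr)
        exact Sum.inl_ne_inr (e3.trans e2.symm)
      · have e1 := key (Sum.inr p₁) h1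
        rcases eq_or_ne (Sum.inr p₂ : Γ ⊕ M) b₂ with h2 | h2
        · have e3 := key (Sum.inl 1) (by rw [← h2]; exact Sum.inl_ne_inr)
          exact Sum.inl_ne_inr (e3.trans e1.symm)
        · exact d1 (e1.trans (key (Sum.inr p₂) h2).symm)
    -- swap lemma: b₂ = a
    have hb₂ : b₂ = a := by
      by_contra hne
      have key : ∀ z : Γ ⊕ M, z ≠ bb → z = a₂ := by
        intro z hz
        have h1 : Tendsto (fun j => sumAction Γ (ω j) z) atTop (nhds a) :=
          tluoc_eval hF hz
        have h2 : Tendsto (fun j => sumAction Γ (ω j)⁻¹ (sumAction Γ (ω j) z))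
            atTop (nhds a₂) :=
          tluoc_moving isOpen_compl_singleton hG (fun h => hne h.symm) h1
        have h3 : (fun j => sumAction Γ (ω j)⁻¹ (sumAction Γ (ω j) z)) = fun _ => z :=
          funext fun j => sumAction_inv_cancel' _ _
        rw [h3] at h2
        exact (tendsto_nhds_unique tendsto_const_nhds h2)
      rw [ha₂] at key
      have d1 : (Sum.inr p₁ : Γ ⊕ M) ≠ Sum.inr p₂ := fun h => hp12 (Sum.inr.inj h)
      rcases eq_or_ne (Sum.inr p₁ : Γ ⊕ M) bb with h1 | h1
      · have e2 := key (Sum.inr p₂) (by rw [← h1]; exact d1.symm)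
        have e3 := key (Sum.inl 1) (by rw [← h1]; exact Sum.inl_ne_inr)
        exact Sum.inl_ne_inr (e3.trans e2.symm)
      · have e1 := key (Sum.inr p₁) h1
        rcases eq_or_ne (Sum.inr p₂ : Γ ⊕ M) bb with h2 | h2
        · have e3 := key (Sum.inl 1) (by rw [← h2]; exact Sum.inl_ne_inr)
          exact Sum.inl_ne_inr (e3.trans e1.symm)
        · exact d1 (e1.trans (key (Sum.inr p₂) h2).symm)
    rw [ha₂, hb₂] at hG
    -- bb is in the image of M
    have hclosed : IsClosed (Set.range (Sum.inr : M → Γ ⊕ M)) :=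
      (isCompact_range hembr.continuous).isClosed
    have hbb_range : bb ∈ Set.range (Sum.inr : M → Γ ⊕ M) := by
      have hp : ∃ p : M, (Sum.inr p : Γ ⊕ M) ≠ a := by
        rcases eq_or_ne (Sum.inr p₁ : Γ ⊕ M) a with h1 | h1
        · exact ⟨p₂, by rw [← h1]; exact fun h => hp12 (Sum.inr.inj h.symm)⟩
        · exact ⟨p₁, h1⟩
      obtain ⟨p, hp⟩ := hp
      have h1 : Tendsto (fun j => sumAction Γ (ω j)⁻¹ (Sum.inr p)) atTop (nhds bb) :=
        tluoc_eval hG hp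
      exact hclosed.mem_of_tendsto h1
        (Filter.Eventually.of_forall (fun j => ⟨_, rfl⟩))
    -- a = inr x
    have hinl1bb : (Sum.inl (1:Γ) : Γ ⊕ M) ≠ bb := by
      obtain ⟨b₀, hb₀⟩ := hbb_range
      rw [← hb₀]
      exact Sum.inl_ne_inr
    have ha : a = Sum.inr x := by
      have h1 : Tendsto (fun j => sumAction Γ (ω j) (Sum.inl 1)) atTop (nhds a) :=
        tluoc_eval hF hinl1bb
      have h2 : (fun j => sumAction Γ (ω j) (Sum.inl 1)) =
          fun j => (Sum.inl (ω j) : Γ ⊕ M) := funext fun j => by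
        rw [sumAction_inl, mul_one]
      rw [h2] at h1
      exact tendsto_nhds_unique h1 hω_tendsto
    rw [ha] at hF hG
    -- limits of the inverse elements
    have hinv1 : Tendsto (fun j => (Sum.inl (ω j)⁻¹ : Γ ⊕ M)) atTop (nhds bb) := by
      have h1 : Tendsto (fun j => sumAction Γ (ω j)⁻¹ (Sum.inl 1)) atTop (nhds bb) :=
        tluoc_eval hG Sum.inl_ne_inr
      have h2 : (fun j => sumAction Γ (ω j)⁻¹ (Sum.inl 1)) =
          fun j => (Sum.inl (ω j)⁻¹ : Γ ⊕ M) := funext fun j => by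
        rw [sumAction_inl, mul_one]
      rwa [h2] at h1
    have hinv2 : Tendsto (fun j => (Sum.inl ((α * ω j)⁻¹) : Γ ⊕ M)) atTop (nhds bb) := by
      have h1 : Tendsto (fun j => sumAction Γ (ω j)⁻¹ (Sum.inl α⁻¹)) atTop (nhds bb) :=
        tluoc_eval hG Sum.inl_ne_inr
      have h2 : (fun j => sumAction Γ (ω j)⁻¹ (Sum.inl α⁻¹)) =
          fun j => (Sum.inl ((α * ω j)⁻¹) : Γ ⊕ M) := funext fun j => by
        rw [sumAction_inl, mul_inv_rev]
      rwa [h2] at h1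
    have hη : Tendsto (fun j =>
        dist (Sum.inl (ω j)⁻¹ : Γ ⊕ M) (Sum.inl ((α * ω j)⁻¹) : Γ ⊕ M)) atTop (nhds 0) := by
      have := hinv1.dist hinv2
      simpa using this
    -- approximate maximizers
    have hmaxsel : ∀ β : Γ, ∃ y : M,
        nrm β - ε' < σ β y - psiF c (dist (Sum.inr y : Γ ⊕ M) (Sum.inl β⁻¹)) := by
      intro β
      have h1 : nrm β - ε' < nrm β := by linarith
      rw [hnrm_eq β] at h1
      obtain ⟨z, hz⟩ := exists_lt_of_lt_ciSup h1
      refine ⟨z, ?_⟩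
      rw [hnrm_eq β]
      exact hz
    choose ys hys using fun j => hmaxsel (ω j)
    choose ys' hys' using fun j => hmaxsel (α * ω j)
    have hτy : ∀ j, τ < dist (Sum.inr (ys j) : Γ ⊕ M) (Sum.inl (ω j)⁻¹) := by
      intro j
      refine H4 (ω j) (ys j) ?_
      have := hys j
      linarith
    have hτy' : ∀ j, τ < dist (Sum.inr (ys' j) : Γ ⊕ M) (Sum.inl ((α * ω j)⁻¹)) := by
      intro j
      refine H4 (α * ω j) (ys' j) ?_
      have := hys' j
      linarith
    -- extract convergent subsequences of the maximizers
    obtain ⟨yl, -, φ₄, hφ₄, hy₄⟩ :=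
      IsCompact.tendsto_subseq (x := ys) isCompact_univ (fun n => Set.mem_univ _)
    obtain ⟨ylp, -, φ₅, hφ₅, hy₅⟩ :=
      IsCompact.tendsto_subseq (x := fun j => ys' (φ₄ j)) isCompact_univ
        (fun n => Set.mem_univ _)
    set ρ : ℕ → ℕ := fun i => φ₄ (φ₅ i) with hρdef
    have hρ : StrictMono ρ := hφ₄.comp hφ₅
    have hY : Tendsto (fun i => ys (ρ i)) atTop (nhds yl) := hy₄.comp hφ₅.tendsto_atTop
    have hY' : Tendsto (fun i => ys' (ρ i)) atTop (nhds ylp) := hy₅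
    have hYX : Tendsto (fun i => (Sum.inr (ys (ρ i)) : Γ ⊕ M)) atTop (nhds (Sum.inr yl)) :=
      (hembr.continuous.tendsto _).comp hY
    have hYX' : Tendsto (fun i => (Sum.inr (ys' (ρ i)) : Γ ⊕ M)) atTop (nhds (Sum.inr ylp)) :=
      (hembr.continuous.tendsto _).comp hY'
    have hinv1ρ : Tendsto (fun i => (Sum.inl (ω (ρ i))⁻¹ : Γ ⊕ M)) atTop (nhds bb) :=
      hinv1.comp hρ.tendsto_atTop
    have hinv2ρ : Tendsto (fun i => (Sum.inl ((α * ω (ρ i))⁻¹) : Γ ⊕ M)) atTop (nhds bb) :=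
      hinv2.comp hρ.tendsto_atTop
    have hηρ : Tendsto (fun i =>
        dist (Sum.inl (ω (ρ i))⁻¹ : Γ ⊕ M) (Sum.inl ((α * ω (ρ i))⁻¹) : Γ ⊕ M))
        atTop (nhds 0) := hη.comp hρ.tendsto_atTop
    have hFρ : TendstoLocallyUniformlyOnConst (fun i => sumAction Γ (ω (ρ i)))
        (Sum.inr x) {bb}ᶜ := tluoc_subseq hF hρ
    -- the maximizers stay away from bb
    have hylbb : (Sum.inr yl : Γ ⊕ M) ≠ bb := by
      have hD : Tendsto (fun i =>
          dist (Sum.inr (ys (ρ i)) : Γ ⊕ M) (Sum.inl (ω (ρ i))⁻¹)) atTop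
          (nhds (dist (Sum.inr yl : Γ ⊕ M) bb)) := hYX.dist hinv1ρ
      have hτle : τ ≤ dist (Sum.inr yl : Γ ⊕ M) bb :=
        ge_of_tendsto hD (Filter.Eventually.of_forall fun i => (hτy (ρ i)).le)
      intro h
      rw [h] at hτle
      simp at hτle
      linarith
    have hylpbb : (Sum.inr ylp : Γ ⊕ M) ≠ bb := by
      have hD : Tendsto (fun i =>
          dist (Sum.inr (ys' (ρ i)) : Γ ⊕ M) (Sum.inl ((α * ω (ρ i))⁻¹))) atTop
          (nhds (dist (Sum.inr ylp : Γ ⊕ M) bb)) := hYX'.dist hinv2ρ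
      have hτle : τ ≤ dist (Sum.inr ylp : Γ ⊕ M) bb :=
        ge_of_tendsto hD (Filter.Eventually.of_forall fun i => (hτy' (ρ i)).le)
      intro h
      rw [h] at hτle
      simp at hτle
      linarith
    -- images of maximizers converge to x
    have himg : Tendsto (fun i => (ω (ρ i) : M ≃ₜ M) (ys (ρ i))) atTop (nhds x) := by
      have h1 : Tendsto (fun i => sumAction Γ (ω (ρ i)) (Sum.inr (ys (ρ i)))) atTop
          (nhds (Sum.inr x)) :=
        tluoc_moving isOpen_compl_singleton hFρ hylbb hYX
      have h2 : (fun i => sumAction Γ (ω (ρ i)) (Sum.inr (ys (ρ i)))) =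
          fun i => (Sum.inr ((ω (ρ i) : M ≃ₜ M) (ys (ρ i))) : Γ ⊕ M) :=
        funext fun i => rfl
      rw [h2] at h1
      exact (hembr.tendsto_nhds_iff).2 h1
    have himg' : Tendsto (fun i => (ω (ρ i) : M ≃ₜ M) (ys' (ρ i))) atTop (nhds x) := by
      have h1 : Tendsto (fun i => sumAction Γ (ω (ρ i)) (Sum.inr (ys' (ρ i)))) atTop
          (nhds (Sum.inr x)) :=
        tluoc_moving isOpen_compl_singleton hFρ hylpbb hYX'
      have h2 : (fun i => sumAction Γ (ω (ρ i)) (Sum.inr (ys' (ρ i)))) =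
          fun i => (Sum.inr ((ω (ρ i) : M ≃ₜ M) (ys' (ρ i))) : Γ ⊕ M) :=
        funext fun i => rfl
      rw [h2] at h1
      exact (hembr.tendsto_nhds_iff).2 h1
    -- coarse continuity at x
    have hcc := hσ.coarse_cont α x ε' hε'pos
    have hccY : ∀ᶠ i in atTop, |σ α x - σ α ((ω (ρ i) : M ≃ₜ M) (ys (ρ i)))| < κ + ε' :=
      himg.eventually hcc
    have hccY' : ∀ᶠ i in atTop, |σ α x - σ α ((ω (ρ i) : M ≃ₜ M) (ys' (ρ i)))| < κ + ε' :=
      himg'.eventually hcc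
    -- eventually η is small
    have hηsmall : ∀ᶠ i in atTop,
        dist (Sum.inl (ω (ρ i))⁻¹ : Γ ⊕ M) (Sum.inl ((α * ω (ρ i))⁻¹) : Γ ⊕ M) <
          min (τ/2) (ε'/(Λ+1)) := by
      have hpos : 0 < min (τ/2) (ε'/(Λ+1)) := by
        apply lt_min (by linarith)
        positivity
      exact (tendsto_order.1 hηρ).2 _ hpos
    -- choose a good index and conclude
    obtain ⟨i, hm7, hm8, hm9⟩ := (hccY.and (hccY'.and hηsmall)).exists
    set β : Γ := ω (ρ i) with hβdef
    set y : M := ys (ρ i) with hydef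
    set y' : M := ys' (ρ i) with hy'def
    set t : ℝ := dist (Sum.inr y : Γ ⊕ M) (Sum.inl β⁻¹) with htdef
    set t' : ℝ := dist (Sum.inr y : Γ ⊕ M) (Sum.inl ((α * β)⁻¹)) with ht'def
    set s : ℝ := dist (Sum.inr y' : Γ ⊕ M) (Sum.inl ((α * β)⁻¹)) with hsdef
    set s' : ℝ := dist (Sum.inr y' : Γ ⊕ M) (Sum.inl β⁻¹) with hs'def
    set η : ℝ := dist (Sum.inl β⁻¹ : Γ ⊕ M) (Sum.inl ((α * β)⁻¹) : Γ ⊕ M) with hηdef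
    have m1 : nrm β - ε' < σ β y - psiF c t := hys (ρ i)
    have m2 : nrm (α * β) - ε' < σ (α * β) y' - psiF c s := hys' (ρ i)
    have m3 : σ (α * β) y - psiF c t' ≤ nrm (α * β) := by
      rw [hnrm_eq (α * β)]
      exact le_ciSup (hbdd (α * β)) y
    have m4 : σ β y' - psiF c s' ≤ nrm β := by
      rw [hnrm_eq β]
      exact le_ciSup (hbdd β) y'
    have m5 := hσ.cocycle α β y
    have m6 := hσ.cocycle α β y'
    have τt : τ < t := hτy (ρ i)
    have τs : τ < s := hτy' (ρ i)
    -- distance comparisons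
    have htt' : |t - t'| ≤ η := by
      rw [htdef, ht'def, hηdef, dist_comm (Sum.inr y : Γ ⊕ M) (Sum.inl β⁻¹),
        dist_comm (Sum.inr y : Γ ⊕ M) (Sum.inl ((α*β)⁻¹))]
      exact abs_dist_sub_le _ _ _
    have hss' : |s - s'| ≤ η := by
      rw [hsdef, hs'def, hηdef, dist_comm (Sum.inr y' : Γ ⊕ M) (Sum.inl β⁻¹),
        dist_comm (Sum.inr y' : Γ ⊕ M) (Sum.inl ((α*β)⁻¹)), abs_sub_comm]
      exact abs_dist_sub_le _ _ _
    have hηbd : η < min (τ/2) (ε'/(Λ+1)) := hm9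
    have hητ : η < τ/2 := lt_of_lt_of_le hηbd (min_le_left _ _)
    have hηε : η < ε'/(Λ+1) := lt_of_lt_of_le hηbd (min_le_right _ _)
    have hηnn : 0 ≤ η := dist_nonneg
    clear_value β y y' t t' s s' η
    have ht2 : τ/2 ≤ t := by linarith
    have hs2 : τ/2 ≤ s := by linarith
    have ht'2 : τ/2 ≤ t' := by
      have := (abs_le.1 htt').2
      linarith
    have hs'2 : τ/2 ≤ s' := by
      have := (abs_le.1 hss').2
      linarith
    have hΛη : Λ * η ≤ ε' := by
      have h1 : Λ * η ≤ (Λ + 1) * η := mul_le_mul_of_nonneg_right (by linarith) hηnn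
      have h2 : (Λ + 1) * η ≤ (Λ + 1) * (ε'/(Λ+1)) :=
        mul_le_mul_of_nonneg_left hηε.le (by linarith)
      have h3 : (Λ + 1) * (ε'/(Λ+1)) = ε' := by
        field_simp
      linarith
    have hΨt : psiF c t' ≤ psiF c t + ε' := by
      have h1 := hΛ t' t ht'2 ht2
      have h2 : |t' - t| ≤ η := by rw [abs_sub_comm]; exact htt'
      have h3 : Λ * |t' - t| ≤ Λ * η := mul_le_mul_of_nonneg_left h2 hΛnn
      linarith
    have hΨs : psiF c s' ≤ psiF c s + ε' := by
      have h1 := hΛ s' s hs'2 hs2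
      have h2 : |s' - s| ≤ η := by rw [abs_sub_comm]; exact hss'
      have h3 : Λ * |s' - s| ≤ Λ * η := mul_le_mul_of_nonneg_left h2 hΛnn
      linarith
    -- the two directions
    have hm5a := (abs_le.1 m5).1
    have hm6a := (abs_le.1 m6).2
    have hm7a := (abs_le.1 hm7.le).1
    have hm7b := (abs_le.1 hm7.le).2
    have hm8a := (abs_le.1 hm8.le).1
    have hm8b := (abs_le.1 hm8.le).2
    have hlow : σ α x - 2*κ - 3*ε' ≤ nrm (α * β) - nrm β := by
      have h1 : σ α ((β : M ≃ₜ M) y) + σ β y - κ ≤ σ (α * β) y := by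
        have := (abs_le.1 m5).1
        linarith
      have h2 : σ α x - κ - ε' ≤ σ α ((β : M ≃ₜ M) y) := by linarith
      linarith
    have hhigh : nrm (α * β) - nrm β ≤ σ α x + 2*κ + 3*ε' := by
      have h1 : σ (α * β) y' ≤ σ α ((β : M ≃ₜ M) y') + σ β y' + κ := by
        have := (abs_le.1 m6).2
        linarith
      have h2 : σ α ((β : M ≃ₜ M) y') ≤ σ α x + κ + ε' := by linarith
      linarith
    have hfinal : |σ α x - (nrm (α * β) - nrm β)| ≤ 2*κ + ε := by
      rw [abs_le]
      constructor
      · linarith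
      · linarith
    obtain ⟨n, hn⟩ := hω_mem (ρ i)
    refine ⟨n, ?_⟩
    rw [hn, ← hβdef]
    exact hfinal
  -- Part 1 of the statement
  have part1 : ∀ (α : Γ) (x : M), x ∈ limitSet Γ → ∀ ε : ℝ, 0 < ε →
      ∃ U ∈ @nhds _ (ctop m) (Sum.inr x : Γ ⊕ M), ∀ γ : Γ, (Sum.inl γ : Γ ⊕ M) ∈ U →
        |σ α x - (nrm (α * γ) - nrm γ)| ≤ 2 * κ + ε := by
    intro α x _ ε hε
    by_contra hcon
    push_neg at hcon
    have hsel : ∀ n : ℕ, ∃ γ : Γ,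
        (Sum.inl γ : Γ ⊕ M) ∈ Metric.ball (Sum.inr x : Γ ⊕ M) (1/(n+1)) ∧
        2*κ + ε < |σ α x - (nrm (α * γ) - nrm γ)| := by
      intro n
      have hball : Metric.ball (Sum.inr x : Γ ⊕ M) (1/(n+1)) ∈
          @nhds _ (ctop m) (Sum.inr x : Γ ⊕ M) :=
        Metric.ball_mem_nhds _ (by positivity)
      exact hcon _ hball
    choose gs hgs1 hgs2 using hsel
    have htend : Tendsto (fun n => (Sum.inl (gs n) : Γ ⊕ M)) atTop (nhds (Sum.inr x)) := by
      rw [Metric.tendsto_nhds]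
      intro r hr
      obtain ⟨N, hN⟩ := exists_nat_gt (1/r)
      filter_upwards [eventually_ge_atTop N] with n hn
      have hd := hgs1 n
      rw [Metric.mem_ball] at hd
      have h1 : (1:ℝ)/r < (n:ℝ) + 1 := by
        have h2 : (N:ℝ) ≤ (n:ℝ) := by exact_mod_cast hn
        linarith
      have h3 : (1:ℝ)/((n:ℝ)+1) < r := by
        rw [div_lt_iff₀ (by positivity)]
        rw [div_lt_iff₀ hr] at h1
        nlinarith
      calc dist (Sum.inl (gs n) : Γ ⊕ M) (Sum.inr x) < 1/((n:ℝ)+1) := hd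
        _ < r := h3
    obtain ⟨n, hn⟩ := hmain α x ε hε gs htend
    exact absurd hn (not_le.2 (hgs2 n))
  -- Part 2 of the statement
  refine ⟨⟨nrm, hexpnrm, part1⟩, ?_⟩
  intro h' hh'
  have hBex : ∃ B : ℝ, 0 ≤ B ∧ ∀ γ : Γ, |h' γ - nrm γ| ≤ B := by
    obtain ⟨C', hC', hspec'⟩ := hh'.2 ε₀ hε₀pos
    have hcknn : (0:ℝ) ≤ c k₀ := le_trans (by positivity) (hc_ge k₀)
    refine ⟨C' + (c k₀ + K₀), by linarith, fun γ => ?_⟩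
    have key : ∀ q : M, ε₀ < dist (Sum.inr q : Γ ⊕ M) (Sum.inl γ⁻¹) →
        |h' γ - nrm γ| ≤ C' + (c k₀ + K₀) := by
      intro q hq
      have h1 := hspec' γ q hq
      have h2 : |σ γ q - h₀ γ| ≤ c k₀ := hc_exp k₀ γ q (lt_trans hk₀spec hq)
      have h3 := habs γ
      rw [abs_le] at h1 h2 h3 ⊢
      constructor <;> linarith
    rcases htwo (Sum.inl γ⁻¹ : Γ ⊕ M) with h | h
    · exact key p₁ h
    · exact key p₂ h
  obtain ⟨B, hB0, hB⟩ := hBex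
  refine ⟨2*κ + 1 + 2*B, by linarith [hσ.nonneg], fun α x hx => ?_⟩
  obtain ⟨U, hU, hUspec⟩ := part1 α x hx 1 one_pos
  refine ⟨U, hU, fun γ hγ => ?_⟩
  have h1 := hUspec γ hγ
  have h2 := hB (α * γ)
  have h3 := hB γ
  rw [abs_le] at h1 h2 h3 ⊢
  constructor <;> linarith
end

section
/- (Shadow Lemma) Let Γ ⊂ Homeo(M) be a non-elementary convergence group, d a compatible metric on Γ ⊔ M, σ : Γ × M → ℝ an expanding coarse-cocycle with magnitude ‖·‖_σ, and μ a coarse σ-Patterson–Sullivan measure of dimension β. Then there exists ε₀ > 0 such that for every ε ∈ (0, ε₀] there is a constant C = C(ε) > 1 with C^{-1} e^{−β‖γ‖_σ} ≤ μ(S_ε(γ)) ≤ C e^{−β‖γ‖_σ} for all γ ∈ Γ. -/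
open Filter Topology MeasureTheory Set

variable {M : Type*} [MetricSpace M] [CompactSpace M]

/-! ### Auxiliary lemmas -/
set_option linter.unusedSectionVars false

section Aux

variable {M : Type*} [MetricSpace M] [CompactSpace M] {Γ : Subgroup (M ≃ₜ M)}

lemma coe_mul_apply (γ₁ γ₂ : Γ) (x : M) :
    ((γ₁ * γ₂ : Γ) : M ≃ₜ M) x = (γ₁ : M ≃ₜ M) ((γ₂ : M ≃ₜ M) x) := rfl

lemma coe_one_apply (x : M) : ((1 : Γ) : M ≃ₜ M) x = x := rfl

lemma coe_inv_apply (γ : Γ) (x : M) :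
    ((γ⁻¹ : Γ) : M ≃ₜ M) x = (γ : M ≃ₜ M).symm x := rfl

lemma coe_pow_succ_apply (γ : Γ) (n : ℕ) (x : M) :
    ((γ ^ (n+1) : Γ) : M ≃ₜ M) x = ((γ ^ n : Γ) : M ≃ₜ M) ((γ : M ≃ₜ M) x) := by
  rw [pow_succ]; rfl

lemma coe_pow_add_apply (γ : Γ) (j k : ℕ) (x : M) :
    ((γ ^ (j + k) : Γ) : M ≃ₜ M) x = ((γ ^ j : Γ) : M ≃ₜ M) (((γ ^ k : Γ) : M ≃ₜ M) x) := by
  rw [pow_add]; rfl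

/-- Pointwise convergence from locally uniform convergence to a constant. -/
lemma TendstoLocallyUniformlyOnConst.tendsto_at {X Y : Type*} [TopologicalSpace X]
    [TopologicalSpace Y] {F : ℕ → X → Y} {a : Y} {S : Set X}
    (hF : TendstoLocallyUniformlyOnConst F a S) {x : X} (hx : x ∈ S) :
    Tendsto (fun n => F n x) atTop (nhds a) := by
  intro U hU
  obtain ⟨V, hV, hev⟩ := hF U hU x hx
  have hxV : x ∈ V := by
    obtain ⟨u, hu, hxu, huV⟩ := mem_nhdsWithin.1 hV
    exact huV ⟨hxu, hx⟩
  exact (hev.mono fun n hn => hn x hxV)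

/-- Uniform convergence on compact subsets, from locally uniform convergence
to a constant. -/
lemma TendstoLocallyUniformlyOnConst.eventually_mapsTo {X Y : Type*} [TopologicalSpace X]
    [TopologicalSpace Y] {F : ℕ → X → Y} {a : Y} {S : Set X}
    (hF : TendstoLocallyUniformlyOnConst F a S) {K : Set X} (hK : IsCompact K)
    (hKS : K ⊆ S) {U : Set Y} (hU : U ∈ nhds a) :
    ∀ᶠ n in atTop, ∀ y ∈ K, F n y ∈ U := by
  choose V hV hVev using fun x (hx : x ∈ K) => hF U hU x (hKS hx)
  choose W hWopen hWmem hWsub using fun x hx => mem_nhdsWithin.1 (hV x hx)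
  obtain ⟨t, hcov⟩ := hK.elim_nhds_subcover' (fun x hx => W x hx)
    (fun x hx => (hWopen x hx).mem_nhds (hWmem x hx))
  have : ∀ᶠ n in atTop, ∀ x ∈ t, ∀ y ∈ V x.1 x.2, F n y ∈ U := by
    rw [Filter.eventually_all_finset]
    exact fun x _ => hVev x.1 x.2
  refine this.mono fun n hn y hy => ?_
  rcases Set.mem_iUnion₂.1 (hcov hy) with ⟨x, hxt, hyW⟩
  exact hn x hxt y (hWsub x.1 x.2 ⟨hyW, hKS hy⟩)

end Aux
section Aux2

set_option linter.unusedSectionVars false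

variable {M : Type*} [MetricSpace M] [CompactSpace M] {Γ : Subgroup (M ≃ₜ M)}

lemma coe_pow_succ_apply' (γ : Γ) (n : ℕ) (x : M) :
    ((γ ^ (n+1) : Γ) : M ≃ₜ M) x = (γ : M ≃ₜ M) (((γ ^ n : Γ) : M ≃ₜ M) x) := by
  rw [pow_succ']; rfl

lemma inv_pow_apply_pow_apply (γ : Γ) (k : ℕ) (x : M) :
    ((γ⁻¹ ^ k : Γ) : M ≃ₜ M) (((γ ^ k : Γ) : M ≃ₜ M) x) = x := by
  have h1 : ((γ⁻¹ ^ k * γ ^ k : Γ) : M ≃ₜ M) x = x := by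
    rw [inv_pow, inv_mul_cancel]; rfl
  rw [← coe_mul_apply]; exact h1

/-- The nested sets `(ρ^k)⁻¹ (closure U)` intersect in a single point. -/
lemma lox_sink (hΓ : IsConvergenceGroup Γ) (ρ : Γ) (U V : Set M)
    (hdisj : ∀ x, x ∈ closure U → x ∈ closure V → False)
    {e a z : M} (he : e ∈ U) (ha : a ∈ V) (hzU : z ∉ U) (hzV : z ∉ V)
    (hmap : ∀ x, x ∉ U → (ρ : M ≃ₜ M) x ∈ V) :
    ∃ q ∈ closure U,
      (⋂ k, {x : M | ((ρ ^ k : Γ) : M ≃ₜ M) x ∈ closure U}) = {q} := by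
  have hUV : ∀ x, x ∈ U → x ∈ closure V → False := fun x hx =>
    hdisj x (subset_closure hx)
  have hVU : ∀ x, x ∈ V → x ∈ closure U → False := fun x hx hx' =>
    hdisj x hx' (subset_closure hx)
  have f2 : ∀ x ∈ closure V, (ρ : M ≃ₜ M) x ∈ V := fun x hx =>
    hmap x (fun hxU => hUV x hxU hx)
  -- the sets S k
  set S : ℕ → Set M := fun k => {x : M | ((ρ ^ k : Γ) : M ≃ₜ M) x ∈ closure U} with hS
  have hSclosed : ∀ k, IsClosed (S k) := fun k =>
    isClosed_closure.preimage ((ρ ^ k : Γ) : M ≃ₜ M).continuous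
  have hSne : ∀ k, (S k).Nonempty := by
    intro k
    refine ⟨((ρ ^ k : Γ) : M ≃ₜ M).symm e, ?_⟩
    show ((ρ ^ k : Γ) : M ≃ₜ M) (((ρ ^ k : Γ) : M ≃ₜ M).symm e) ∈ closure U
    rw [Homeomorph.apply_symm_apply]
    exact subset_closure he
  have hSdec : ∀ k, S (k+1) ⊆ S k := by
    intro k x hx
    have hx' : (ρ : M ≃ₜ M) (((ρ ^ k : Γ) : M ≃ₜ M) x) ∈ closure U := by
      rw [← coe_pow_succ_apply']; exact hx
    by_contra hxk
    have : ((ρ ^ k : Γ) : M ≃ₜ M) x ∉ U := by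
      intro hmem; exact hxk (subset_closure hmem)
    exact hVU _ (hmap _ this) hx'
  have hQne : (⋂ k, S k).Nonempty :=
    IsCompact.nonempty_iInter_of_sequence_nonempty_isCompact_isClosed S hSdec hSne
      ((hSclosed 0).isCompact) hSclosed
  -- injectivity of powers
  have hpow1V : ∀ k, ∀ x, x ∉ U → ((ρ ^ (k+1) : Γ) : M ≃ₜ M) x ∈ V := by
    intro k
    induction k with
    | zero => intro x hx; rw [pow_one]; exact hmap x hx
    | succ k ih =>
      intro x hx
      rw [coe_pow_succ_apply']
      exact f2 _ (subset_closure (ih x hx))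
  have hinj : Function.Injective (fun k : ℕ => (ρ ^ k : Γ)) := by
    have key : ∀ i j : ℕ, i < j → (ρ ^ i : Γ) = ρ ^ j → False := by
      intro i j hij hpow
      have hd : (ρ ^ (j - i) : Γ) = 1 := by
        have : (ρ ^ i : Γ) * ρ ^ (j - i) = ρ ^ i * 1 := by
          rw [mul_one, ← pow_add, hpow]
          congr 1
          omega
        exact mul_left_cancel this
      obtain ⟨d, hdeq⟩ : ∃ d, j - i = d + 1 := ⟨j - i - 1, by omega⟩
      have := hpow1V d z hzU
      rw [← hdeq, hd] at this
      exact hzV (by rwa [coe_one_apply] at this)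
    intro i j hij
    by_contra hne
    rcases lt_or_gt_of_ne hne with hlt | hlt
    · exact key i j hlt hij
    · exact key j i hlt hij.symm
  obtain ⟨A₁, B₁, θ, hθ, hconv⟩ := hΓ (fun k => (ρ ^ k : Γ)) hinj
  -- some point of closure V differs from B₁
  have hVwit : ∃ x' ∈ closure V, x' ≠ B₁ := by
    by_contra hcon
    push_neg at hcon
    have haB : a = B₁ := hcon a (subset_closure ha)
    have h1 : (ρ : M ≃ₜ M) a = B₁ := hcon _ (subset_closure (f2 a (subset_closure ha)))
    have h2 : (ρ : M ≃ₜ M) z = B₁ := hcon _ (subset_closure (hmap z hzU))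
    have : a = z := (ρ : M ≃ₜ M).injective (h1.trans h2.symm)
    exact hzV (this ▸ ha)
  obtain ⟨x', hx'V, hx'B⟩ := hVwit
  -- closure V is forward invariant
  have hVinv : ∀ k, ∀ x ∈ closure V, ((ρ ^ k : Γ) : M ≃ₜ M) x ∈ closure V := by
    intro k
    induction k with
    | zero => intro x hx; rw [pow_zero]; exact hx
    | succ k ih =>
      intro x hx
      rw [coe_pow_succ_apply']
      exact subset_closure (f2 _ (ih x hx))
  have hA₁V : A₁ ∈ closure V := by
    have ht := hconv.tendsto_at (x := x') (by simpa using hx'B)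
    exact isClosed_closure.mem_of_tendsto ht
      (Filter.Eventually.of_forall fun j => hVinv _ _ hx'V)
  -- every point of the intersection equals B₁
  have hsub : ∀ y ∈ ⋂ k, S k, y = B₁ := by
    intro y hy
    by_contra hyB
    have ht := hconv.tendsto_at (x := y) (by simpa using hyB)
    have hA₁U : A₁ ∈ closure U := by
      refine isClosed_closure.mem_of_tendsto ht (Filter.Eventually.of_forall fun j => ?_)
      exact Set.mem_iInter.1 hy (θ j)
    exact hdisj A₁ hA₁U hA₁V
  obtain ⟨q0, hq0⟩ := hQne
  have hq0U : q0 ∈ closure U := Set.mem_iInter.1 hq0 0 |>.out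
  refine ⟨q0, by simpa [S, pow_zero] using hq0U, ?_⟩
  apply Set.eq_singleton_iff_unique_mem.2
  exact ⟨hq0, fun y hy => (hsub y hy).trans (hsub q0 hq0).symm⟩

end Aux2
section Aux3

set_option linter.unusedSectionVars false

variable {M : Type*} [MetricSpace M] [CompactSpace M] {Γ : Subgroup (M ≃ₜ M)}

/-- Locally uniform convergence of the powers towards the attracting point. -/
lemma lox_conv (ρ : Γ) (U V : Set M)
    (hdisj : ∀ x, x ∈ closure U → x ∈ closure V → False)
    (hmap : ∀ x, x ∉ U → (ρ : M ≃ₜ M) x ∈ V)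
    {p q : M}
    (hP : (⋂ k, {x : M | ((ρ⁻¹ ^ k : Γ) : M ≃ₜ M) x ∈ closure V}) = {p})
    (hQ : (⋂ k, {x : M | ((ρ ^ k : Γ) : M ≃ₜ M) x ∈ closure U}) = {q}) :
    TendstoLocallyUniformlyOnConst (fun n x => ((ρ ^ n : Γ) : M ≃ₜ M) x) p {q}ᶜ := by
  have hUV : ∀ x, x ∈ U → x ∈ closure V → False := fun x hx =>
    hdisj x (subset_closure hx)
  have hVU : ∀ x, x ∈ V → x ∈ closure U → False := fun x hx hx' =>
    hdisj x hx' (subset_closure hx)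
  have f2 : ∀ x ∈ closure V, (ρ : M ≃ₜ M) x ∈ V := fun x hx =>
    hmap x (fun hxU => hUV x hxU hx)
  have f3 : ∀ y, y ∉ V → (ρ : M ≃ₜ M).symm y ∈ U := by
    intro y hy
    by_contra hc
    have := hmap _ hc
    rw [Homeomorph.apply_symm_apply] at this
    exact hy this
  set T : ℕ → Set M := fun k => {x : M | ((ρ⁻¹ ^ k : Γ) : M ≃ₜ M) x ∈ closure V} with hT
  set S : ℕ → Set M := fun k => {x : M | ((ρ ^ k : Γ) : M ≃ₜ M) x ∈ closure U} with hS
  have hTclosed : ∀ k, IsClosed (T k) := fun k =>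
    isClosed_closure.preimage ((ρ⁻¹ ^ k : Γ) : M ≃ₜ M).continuous
  have hSclosed : ∀ k, IsClosed (S k) := fun k =>
    isClosed_closure.preimage ((ρ ^ k : Γ) : M ≃ₜ M).continuous
  have hTdec : ∀ k, T (k+1) ⊆ T k := by
    intro k x hx
    have h1 : ((ρ⁻¹ : Γ) : M ≃ₜ M) (((ρ⁻¹ ^ k : Γ) : M ≃ₜ M) x) ∈ closure V := by
      rw [← coe_pow_succ_apply']; exact hx
    by_contra hxk
    have h2 : ((ρ⁻¹ ^ k : Γ) : M ≃ₜ M) x ∉ V := fun hmem => hxk (subset_closure hmem)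
    have := f3 _ h2
    rw [coe_inv_apply] at h1
    exact hUV _ this h1
  have hTdec' : ∀ j k, j ≤ k → T k ⊆ T j := by
    intro j k hjk
    induction hjk with
    | refl => exact le_refl _
    | step h ih => exact fun x hx => ih (hTdec _ hx)
  -- Step A: uniform attraction on closure V
  have stepA : ∀ O : Set M, IsOpen O → p ∈ O →
      ∃ k₀, ∀ k, k₀ ≤ k → ∀ x ∈ closure V, ((ρ ^ k : Γ) : M ≃ₜ M) x ∈ O := by
    intro O hOopen hpO
    have hTk₀ : ∃ k₀, T k₀ ⊆ O := by
      by_contra hcon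
      push_neg at hcon
      have hne : ∀ k, (T k ∩ Oᶜ).Nonempty := by
        intro k
        obtain ⟨y, hy, hyO⟩ := Set.not_subset.1 (hcon k)
        exact ⟨y, hy, hyO⟩
      have : (⋂ k, T k ∩ Oᶜ).Nonempty := by
        refine IsCompact.nonempty_iInter_of_sequence_nonempty_isCompact_isClosed _
          (fun k => Set.inter_subset_inter_left _ (hTdec k)) hne
          (((hTclosed 0).inter hOopen.isClosed_compl).isCompact)
          (fun k => (hTclosed k).inter hOopen.isClosed_compl)
      obtain ⟨y, hy⟩ := this
      have hyT : y ∈ ⋂ k, T k := Set.mem_iInter.2 fun k => (Set.mem_iInter.1 hy k).1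
      have hyO : y ∈ Oᶜ := (Set.mem_iInter.1 hy 0).2
      rw [hP] at hyT
      exact hyO (hyT ▸ hpO)
    obtain ⟨k₀, hk₀⟩ := hTk₀
    refine ⟨k₀, fun k hk x hx => ?_⟩
    have hmem : ((ρ ^ k : Γ) : M ≃ₜ M) x ∈ T k := by
      show ((ρ⁻¹ ^ k : Γ) : M ≃ₜ M) (((ρ ^ k : Γ) : M ≃ₜ M) x) ∈ closure V
      rw [inv_pow_apply_pow_apply]
      exact hx
    exact hk₀ (hTdec' k₀ k hk hmem)
  -- main proof
  intro Unb hUnb x₀ hx₀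
  obtain ⟨O, hOsub, hOopen, hpO⟩ := mem_nhds_iff.1 hUnb
  obtain ⟨k₀, hk₀⟩ := stepA O hOopen hpO
  have hx₀q : x₀ ≠ q := by simpa using hx₀
  have hk₁ : ∃ k₁, x₀ ∉ S k₁ := by
    by_contra hcon
    push_neg at hcon
    have : x₀ ∈ ⋂ k, S k := Set.mem_iInter.2 hcon
    rw [hQ] at this
    exact hx₀q this
  obtain ⟨k₁, hk₁⟩ := hk₁
  refine ⟨(S k₁)ᶜ, mem_nhdsWithin_of_mem_nhds (((hSclosed k₁).isOpen_compl).mem_nhds hk₁), ?_⟩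
  rw [Filter.eventually_atTop]
  refine ⟨k₀ + (k₁ + 1), fun n hn y hy => ?_⟩
  have hy1 : ((ρ ^ k₁ : Γ) : M ≃ₜ M) y ∉ U := by
    intro hc
    exact hy (subset_closure hc)
  have hy2 : ((ρ ^ (k₁ + 1) : Γ) : M ≃ₜ M) y ∈ closure V := by
    rw [coe_pow_succ_apply']
    exact subset_closure (hmap _ hy1)
  have hnsplit : n = (n - (k₁+1)) + (k₁ + 1) := by omega
  have : ((ρ ^ n : Γ) : M ≃ₜ M) y
      = ((ρ ^ (n - (k₁+1)) : Γ) : M ≃ₜ M) (((ρ ^ (k₁+1) : Γ) : M ≃ₜ M) y) := by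
    conv_lhs => rw [hnsplit]
    rw [coe_pow_add_apply]
  show ((ρ ^ n : Γ) : M ≃ₜ M) y ∈ Unb
  rw [this]
  exact hOsub (hk₀ (n - (k₁+1)) (by omega) _ hy2)

end Aux3
section Aux4

set_option linter.unusedSectionVars false

variable {M : Type*} [MetricSpace M] [CompactSpace M] {Γ : Subgroup (M ≃ₜ M)}

/-- Construction of a loxodromic element from an attracting pair of open sets. -/
lemma exists_lox (hΓ : IsConvergenceGroup Γ) (ρ : Γ) (U V : Set M)
    (hdisj : ∀ x, x ∈ closure U → x ∈ closure V → False)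
    {e a z : M} (he : e ∈ U) (ha : a ∈ V) (hzU : z ∉ U) (hzV : z ∉ V)
    (hmap : ∀ x, x ∉ U → (ρ : M ≃ₜ M) x ∈ V) :
    ∃ p ∈ closure V, ∃ q ∈ closure U, IsLoxodromicWith ρ p q := by
  have hUV : ∀ x, x ∈ U → x ∈ closure V → False := fun x hx =>
    hdisj x (subset_closure hx)
  have hVU : ∀ x, x ∈ V → x ∈ closure U → False := fun x hx hx' =>
    hdisj x hx' (subset_closure hx)
  have f2 : ∀ x ∈ closure V, (ρ : M ≃ₜ M) x ∈ V := fun x hx =>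
    hmap x (fun hxU => hUV x hxU hx)
  have f3 : ∀ y, y ∉ V → (ρ : M ≃ₜ M).symm y ∈ U := by
    intro y hy
    by_contra hc
    have := hmap _ hc
    rw [Homeomorph.apply_symm_apply] at this
    exact hy this
  have hmap' : ∀ x, x ∉ V → ((ρ⁻¹ : Γ) : M ≃ₜ M) x ∈ U := by
    intro x hx
    rw [coe_inv_apply]
    exact f3 x hx
  obtain ⟨q, hqU, hQ⟩ := lox_sink hΓ ρ U V hdisj he ha hzU hzV hmap
  obtain ⟨p, hpV, hP⟩ := lox_sink hΓ ρ⁻¹ V U (fun x h1 h2 => hdisj x h2 h1)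
    ha he hzV hzU hmap'
  have hQ' : (⋂ k, {x : M | ((ρ⁻¹⁻¹ ^ k : Γ) : M ≃ₜ M) x ∈ closure U}) = {q} := by
    rw [inv_inv]; exact hQ
  have conv₁ := lox_conv ρ U V hdisj hmap hP hQ
  have conv₂ := lox_conv ρ⁻¹ V U (fun x h1 h2 => hdisj x h2 h1) hmap' hQ' hP
  -- fixed points
  have hρp : (ρ : M ≃ₜ M) p = p := by
    have hmem : (ρ : M ≃ₜ M) p ∈ ⋂ k, {x : M | ((ρ⁻¹ ^ k : Γ) : M ≃ₜ M) x ∈ closure V} := by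
      refine Set.mem_iInter.2 fun k => ?_
      cases k with
      | zero =>
        show ((ρ⁻¹ ^ 0 : Γ) : M ≃ₜ M) ((ρ : M ≃ₜ M) p) ∈ closure V
        rw [pow_zero, coe_one_apply]
        exact subset_closure (f2 p hpV)
      | succ k =>
        show ((ρ⁻¹ ^ (k+1) : Γ) : M ≃ₜ M) ((ρ : M ≃ₜ M) p) ∈ closure V
        have heq : ((ρ⁻¹ ^ (k+1) : Γ) : M ≃ₜ M) ((ρ : M ≃ₜ M) p)
            = ((ρ⁻¹ ^ (k+1) * ρ : Γ) : M ≃ₜ M) p := (coe_mul_apply _ _ _).symm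
        have heq2 : (ρ⁻¹ ^ (k+1) * ρ : Γ) = ρ⁻¹ ^ k := by group
        rw [heq, heq2]
        have := Set.mem_iInter.1 (by rw [hP]; exact rfl : p ∈ ⋂ k, {x : M | ((ρ⁻¹ ^ k : Γ) : M ≃ₜ M) x ∈ closure V}) k
        exact this
    rw [hP] at hmem
    exact hmem
  have hρq : (ρ : M ≃ₜ M) q = q := by
    have hmem : (ρ : M ≃ₜ M).symm q ∈ ⋂ k, {x : M | ((ρ ^ k : Γ) : M ≃ₜ M) x ∈ closure U} := by
      refine Set.mem_iInter.2 fun k => ?_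
      cases k with
      | zero =>
        show ((ρ ^ 0 : Γ) : M ≃ₜ M) ((ρ : M ≃ₜ M).symm q) ∈ closure U
        rw [pow_zero, coe_one_apply]
        exact subset_closure (f3 q (fun hqu => hVU q hqu hqU))
      | succ k =>
        show ((ρ ^ (k+1) : Γ) : M ≃ₜ M) ((ρ : M ≃ₜ M).symm q) ∈ closure U
        have h0 : ((ρ : M ≃ₜ M).symm q) = ((ρ⁻¹ : Γ) : M ≃ₜ M) q := (coe_inv_apply ρ q).symm
        have heq : ((ρ ^ (k+1) : Γ) : M ≃ₜ M) (((ρ⁻¹ : Γ) : M ≃ₜ M) q)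
            = ((ρ ^ (k+1) * ρ⁻¹ : Γ) : M ≃ₜ M) q := (coe_mul_apply _ _ _).symm
        have heq2 : (ρ ^ (k+1) * ρ⁻¹ : Γ) = ρ ^ k := by group
        rw [h0, heq, heq2]
        exact Set.mem_iInter.1 (by rw [hQ]; exact rfl : q ∈ ⋂ k, {x : M | ((ρ ^ k : Γ) : M ≃ₜ M) x ∈ closure U}) k
    rw [hQ] at hmem
    have : (ρ : M ≃ₜ M) ((ρ : M ≃ₜ M).symm q) = (ρ : M ≃ₜ M) q := by rw [hmem]
    rw [Homeomorph.apply_symm_apply] at this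
    exact this.symm
  exact ⟨p, hpV, q, hqU,
    fun hpq => hdisj p (hpq ▸ hqU) hpV, hρp, hρq, conv₁, conv₂⟩

/-- A fixed point of a loxodromic element is one of its two distinguished fixed points. -/
lemma IsLoxodromicWith.fixed_eq {γ : Γ} {p q : M} (hγ : IsLoxodromicWith γ p q)
    {x : M} (hx : (γ : M ≃ₜ M) x = x) : x = p ∨ x = q := by
  by_cases hxq : x = q
  · exact Or.inr hxq
  · left
    have hfix : ∀ n : ℕ, ((γ ^ n : Γ) : M ≃ₜ M) x = x := by
      intro n
      induction n with
      | zero => rw [pow_zero]; exact coe_one_apply x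
      | succ n ih => rw [coe_pow_succ_apply, hx, ih]
    have ht := hγ.2.2.2.1.tendsto_at (x := x) (by simpa using hxq)
    simp only [hfix] at ht
    exact tendsto_nhds_unique tendsto_const_nhds ht

end Aux4
section Aux5

set_option linter.unusedSectionVars false

variable {M : Type*} [MetricSpace M] [CompactSpace M] {Γ : Subgroup (M ≃ₜ M)}

/-- Transport of locally uniform convergence to a constant along a homeomorphism. -/
lemma TendstoLocallyUniformlyOnConst.conj {F : ℕ → M → M} {p : M} {S : Set M}
    (hF : TendstoLocallyUniformlyOnConst F p S) (α : M ≃ₜ M) :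
    TendstoLocallyUniformlyOnConst (fun n x => α (F n (α.symm x))) (α p) (α.symm ⁻¹' S) := by
  intro U hU x hx
  have hU' : (α : M → M) ⁻¹' U ∈ nhds p := by
    have := α.continuous.continuousAt (x := p)
    exact this hU
  obtain ⟨V, hV, hev⟩ := hF ((α : M → M) ⁻¹' U) hU' (α.symm x) hx
  obtain ⟨u, huo, hxu, husub⟩ := mem_nhdsWithin.1 hV
  refine ⟨(α.symm : M → M) ⁻¹' V, ?_, ?_⟩
  · rw [mem_nhdsWithin]
    exact ⟨(α.symm : M → M) ⁻¹' u, huo.preimage α.symm.continuous, hxu, by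
      intro y hy
      exact husub ⟨hy.1, hy.2⟩⟩
  · refine hev.mono fun n hn y hy => ?_
    exact hn (α.symm y) hy

/-- Conjugation of loxodromic elements. -/
lemma IsLoxodromicWith.conj {γ : Γ} {p q : M} (hγ : IsLoxodromicWith γ p q) (α : Γ) :
    IsLoxodromicWith (α * γ * α⁻¹) ((α : M ≃ₜ M) p) ((α : M ≃ₜ M) q) := by
  obtain ⟨hpq, hp, hq, conv₁, conv₂⟩ := hγ
  have hact : ∀ (δ : Γ) (x : M), ((α * δ * α⁻¹ : Γ) : M ≃ₜ M) x
      = (α : M ≃ₜ M) ((δ : M ≃ₜ M) ((α : M ≃ₜ M).symm x)) := by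
    intro δ x
    rw [coe_mul_apply, coe_mul_apply, coe_inv_apply]
  have hsetp : ((α : M ≃ₜ M).symm : M → M) ⁻¹' ({q}ᶜ) = {((α : M ≃ₜ M) q)}ᶜ := by
    ext y
    simp only [Set.mem_preimage, Set.mem_compl_iff, Set.mem_singleton_iff]
    constructor
    · intro hne he
      exact hne (by rw [he, Homeomorph.symm_apply_apply])
    · intro hne he
      exact hne (by rw [← he, Homeomorph.apply_symm_apply])
  have hsetq : ((α : M ≃ₜ M).symm : M → M) ⁻¹' ({p}ᶜ) = {((α : M ≃ₜ M) p)}ᶜ := by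
    ext y
    simp only [Set.mem_preimage, Set.mem_compl_iff, Set.mem_singleton_iff]
    constructor
    · intro hne he
      exact hne (by rw [he, Homeomorph.symm_apply_apply])
    · intro hne he
      exact hne (by rw [← he, Homeomorph.apply_symm_apply])
  refine ⟨fun hc => hpq ((α : M ≃ₜ M).injective hc), ?_, ?_, ?_, ?_⟩
  · rw [hact, Homeomorph.symm_apply_apply, hp]
  · rw [hact, Homeomorph.symm_apply_apply, hq]
  · have h1 := conv₁.conj (α : M ≃ₜ M)
    rw [hsetp] at h1
    have hpow : ∀ (n : ℕ) (x : M), (((α * γ * α⁻¹) ^ n : Γ) : M ≃ₜ M) x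
        = (α : M ≃ₜ M) (((γ ^ n : Γ) : M ≃ₜ M) ((α : M ≃ₜ M).symm x)) := by
      intro n x
      rw [conj_pow, hact]
    intro U hU x hx
    obtain ⟨V, hV, hev⟩ := h1 U hU x hx
    refine ⟨V, hV, hev.mono fun n hn y hy => ?_⟩
    show (((α * γ * α⁻¹) ^ n : Γ) : M ≃ₜ M) y ∈ U
    rw [hpow]
    exact hn y hy
  · have h2 := conv₂.conj (α : M ≃ₜ M)
    rw [hsetq] at h2
    have hpow : ∀ (n : ℕ) (x : M), (((α * γ * α⁻¹)⁻¹ ^ n : Γ) : M ≃ₜ M) x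
        = (α : M ≃ₜ M) (((γ⁻¹ ^ n : Γ) : M ≃ₜ M) ((α : M ≃ₜ M).symm x)) := by
      intro n x
      have : ((α * γ * α⁻¹)⁻¹ : Γ) = α * γ⁻¹ * α⁻¹ := by group
      rw [this, conj_pow, hact]
    intro U hU x hx
    obtain ⟨V, hV, hev⟩ := h2 U hU x hx
    refine ⟨V, hV, hev.mono fun n hn y hy => ?_⟩
    show (((α * γ * α⁻¹)⁻¹ ^ n : Γ) : M ≃ₜ M) y ∈ U
    rw [hpow]
    exact hn y hy

/-- Injectivity of the conjugates `g^k f g^{-k}`. -/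
lemma conj_seq_injective {g f : Γ} {p q : M} (hg : IsLoxodromicWith g p q)
    (hfp : (f : M ≃ₜ M) p ≠ p) (hx : ∃ x : M, x ≠ q ∧ (f : M ≃ₜ M) x ≠ q) :
    Function.Injective (fun k : ℕ => g ^ k * f * (g ^ k)⁻¹) := by
  have key : ∀ i j : ℕ, i < j → g ^ i * f * (g ^ i)⁻¹ = g ^ j * f * (g ^ j)⁻¹ → False := by
    intro i j hij heq
    set d := j - i with hd
    have hd1 : 1 ≤ d := by omega
    have hcomm : Commute f (g ^ d) := by
      have hj : j = i + d := by omega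
      have heq2 : g ^ i * f * (g ^ i)⁻¹ = g ^ i * (g ^ d * f * (g ^ d)⁻¹) * (g ^ i)⁻¹ := by
        rw [heq, hj, pow_add]
        group
      have h3 : f = g ^ d * f * (g ^ d)⁻¹ :=
        mul_left_cancel (mul_right_cancel heq2)
      have : f * g ^ d = g ^ d * f := by
        conv_lhs => rw [h3]
        group
      exact this
    obtain ⟨x, hxq, hfxq⟩ := hx
    have hcommn : ∀ n : ℕ, f * (g ^ (d * n)) = (g ^ (d * n)) * f := by
      intro n
      have := (hcomm.pow_right n).eq
      rw [← pow_mul] at this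
      exact this
    have heval : ∀ n : ℕ, (f : M ≃ₜ M) (((g ^ (d * n) : Γ) : M ≃ₜ M) x)
        = ((g ^ (d * n) : Γ) : M ≃ₜ M) ((f : M ≃ₜ M) x) := by
      intro n
      have h1 : ((f * g ^ (d * n) : Γ) : M ≃ₜ M) x = ((g ^ (d * n) * f : Γ) : M ≃ₜ M) x := by
        rw [hcommn n]
      rw [coe_mul_apply, coe_mul_apply] at h1
      exact h1
    have hdn : Tendsto (fun n : ℕ => d * n) atTop atTop :=
      tendsto_atTop_mono (fun n => Nat.le_mul_of_pos_left n (by omega)) tendsto_id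
    have hpt : ∀ y : M, y ≠ q → Tendsto (fun n => ((g ^ (d * n) : Γ) : M ≃ₜ M) y)
        atTop (nhds p) := by
      intro y hy
      have := hg.2.2.2.1.tendsto_at (x := y) (by simpa using hy)
      exact this.comp hdn
    have hL : Tendsto (fun n => (f : M ≃ₜ M) (((g ^ (d * n) : Γ) : M ≃ₜ M) x))
        atTop (nhds ((f : M ≃ₜ M) p)) :=
      ((f : M ≃ₜ M).continuous.continuousAt.tendsto).comp (hpt x hxq)
    have hR : Tendsto (fun n => (f : M ≃ₜ M) (((g ^ (d * n) : Γ) : M ≃ₜ M) x))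
        atTop (nhds p) := by
      have := hpt ((f : M ≃ₜ M) x) hfxq
      refine Tendsto.congr (fun n => (heval n).symm) this
    exact hfp (tendsto_nhds_unique hL hR)
  intro i j hij
  by_contra hne
  rcases lt_or_gt_of_ne hne with h | h
  · exact key i j h hij
  · exact key j i h hij.symm

end Aux5
section Aux6

set_option linter.unusedSectionVars false

variable {M : Type*} [MetricSpace M] [CompactSpace M] {Γ : Subgroup (M ≃ₜ M)}

lemma cdist_eq (m : MetricSpace (Γ ⊕ M)) (p q : Γ ⊕ M) :
    cdist m p q = (letI := m; dist p q) := rfl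

/-- The points `inl α` are isolated in the compactification. -/
lemma inl_isolated (m : MetricSpace (Γ ⊕ M)) (hm : IsCompatibleMetric Γ m) (α : Γ) :
    ∃ ρ > 0, ∀ P : Γ ⊕ M, cdist m P (Sum.inl α) < ρ → P = Sum.inl α := by
  letI := m
  haveI : CompactSpace (Γ ⊕ M) := hm.compact
  have hinrcont : Continuous (fun x : M => (Sum.inr x : Γ ⊕ M)) := hm.isEmbedding_inr.continuous
  have hclosed : IsClosed (Set.range (Sum.inr : M → Γ ⊕ M)) :=
    (isCompact_range hinrcont).isClosed
  have hopen : @IsOpen Γ ⊥ {α} := by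
    letI : TopologicalSpace Γ := ⊥
    haveI : DiscreteTopology Γ := ⟨rfl⟩
    exact isOpen_discrete _
  have hemb : @Topology.IsEmbedding Γ (Γ ⊕ M) ⊥ (ctop m) Sum.inl := hm.isEmbedding_inl
  have heq : (⊥ : TopologicalSpace Γ)
      = TopologicalSpace.induced (Sum.inl : Γ → Γ ⊕ M) (ctop m) :=
    @Topology.IsInducing.eq_induced Γ (Γ ⊕ M) ⊥ (ctop m) Sum.inl
      (@Topology.IsEmbedding.toIsInducing Γ (Γ ⊕ M) ⊥ (ctop m) Sum.inl hemb)
  rw [heq] at hopen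
  obtain ⟨W, hWopen, hWpre⟩ := isOpen_induced_iff.1 hopen
  set W' := W ∩ (Set.range (Sum.inr : M → Γ ⊕ M))ᶜ with hW'
  have hW'open : IsOpen W' := hWopen.inter hclosed.isOpen_compl
  have hαW' : Sum.inl α ∈ W' := by
    constructor
    · have : α ∈ (Sum.inl ⁻¹' W : Set Γ) := by rw [hWpre]; rfl
      exact this
    · rintro ⟨x, hx⟩
      exact nomatch hx
  have hW'sub : W' ⊆ {Sum.inl α} := by
    rintro P ⟨hPW, hPr⟩
    cases P with
    | inl β =>
      have : β ∈ (Sum.inl ⁻¹' W : Set Γ) := hPW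
      rw [hWpre] at this
      simp only [Set.mem_singleton_iff] at this ⊢
      rw [this]
    | inr x => exact absurd ⟨x, rfl⟩ hPr
  obtain ⟨ρ, hρ, hball⟩ := Metric.isOpen_iff.1 hW'open (Sum.inl α) hαW'
  refine ⟨ρ, hρ, fun P hP => ?_⟩
  have : P ∈ Metric.ball (Sum.inl α : Γ ⊕ M) ρ := by
    rw [Metric.mem_ball]
    exact hP
  exact hW'sub (hball this)

lemma exists_three_limit (hNE : IsNonElementary Γ) :
    ∃ a₁ a₂ a₃ : M, a₁ ∈ limitSet Γ ∧ a₂ ∈ limitSet Γ ∧ a₃ ∈ limitSet Γ ∧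
      a₁ ≠ a₂ ∧ a₁ ≠ a₃ ∧ a₂ ≠ a₃ := by
  obtain ⟨t, hts, htcard⟩ := Set.exists_subset_encard_eq hNE
  obtain ⟨x, y, z, hxy, hxz, hyz, hteq⟩ := Set.encard_eq_three.1 htcard
  subst hteq
  exact ⟨x, y, z, hts (by simp), hts (by simp), hts (by simp), hxy, hxz, hyz⟩

/-- From three distinct limit points, two distinct limit points different from `b`. -/
lemma exists_two_limit_ne (hNE : IsNonElementary Γ) (b : M) :
    ∃ x y : M, x ∈ limitSet Γ ∧ y ∈ limitSet Γ ∧ x ≠ y ∧ x ≠ b ∧ y ≠ b := by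
  obtain ⟨a₁, a₂, a₃, h1, h2, h3, h12, h13, h23⟩ := exists_three_limit hNE
  by_cases e1 : a₁ = b
  · subst e1
    exact ⟨a₂, a₃, h2, h3, h23, Ne.symm h12, Ne.symm h13⟩
  · by_cases e2 : a₂ = b
    · subst e2
      exact ⟨a₁, a₃, h1, h3, h13, e1, Ne.symm h23⟩
    · exact ⟨a₁, a₂, h1, h2, h12, e1, e2⟩

end Aux6
section Aux7

set_option linter.unusedSectionVars false
set_option maxHeartbeats 1000000

variable {M : Type*} [MetricSpace M] [CompactSpace M] {Γ : Subgroup (M ≃ₜ M)}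

/-- Construction of a loxodromic element with prescribed repelling fixed point `b`
and attracting fixed point near a limit point `c ≠ b`. -/
lemma build_lox (hΓ : IsConvergenceGroup Γ) {b c z' : M}
    (hfix : ∀ γ : Γ, (γ : M ≃ₜ M) b = b)
    (hc : ∃ ρseq : ℕ → Γ,
      TendstoLocallyUniformlyOnConst (fun n x => ((ρseq n : Γ) : M ≃ₜ M) x) c {b}ᶜ)
    (hcb : c ≠ b) (hz'c : z' ≠ c) (hz'b : z' ≠ b) :
    ∃ (g : Γ) (p : M), IsLoxodromicWith g p b ∧
      dist p c ≤ min (min (dist c b) (dist z' c)) (dist z' b) / 3 := by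
  set r := min (min (dist c b) (dist z' c)) (dist z' b) / 3 with hrdef
  have hrpos : 0 < r := by
    have h1 : 0 < dist c b := dist_pos.2 hcb
    have h2 : 0 < dist z' c := dist_pos.2 hz'c
    have h3 : 0 < dist z' b := dist_pos.2 hz'b
    have : 0 < min (min (dist c b) (dist z' c)) (dist z' b) := lt_min (lt_min h1 h2) h3
    positivity
  have hrcb : 3 * r ≤ dist c b := by
    have hle : min (min (dist c b) (dist z' c)) (dist z' b) ≤ dist c b :=
      le_trans (min_le_left _ _) (min_le_left _ _)
    rw [hrdef]; linarith
  have hrzc : 3 * r ≤ dist z' c := by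
    have hle : min (min (dist c b) (dist z' c)) (dist z' b) ≤ dist z' c :=
      le_trans (min_le_left _ _) (min_le_right _ _)
    rw [hrdef]; linarith
  have hrzb : 3 * r ≤ dist z' b := by
    rw [hrdef]; linarith [min_le_right (min (dist c b) (dist z' c)) (dist z' b)]
  set U := Metric.ball b r with hU
  set V := Metric.ball c r with hV
  have hclU : closure U ⊆ Metric.closedBall b r := Metric.closure_ball_subset_closedBall
  have hclV : closure V ⊆ Metric.closedBall c r := Metric.closure_ball_subset_closedBall
  have hdisj : ∀ x, x ∈ closure U → x ∈ closure V → False := by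
    intro x hxU hxV
    have h1 : dist x b ≤ r := Metric.mem_closedBall.1 (hclU hxU)
    have h2 : dist x c ≤ r := Metric.mem_closedBall.1 (hclV hxV)
    have : dist c b ≤ dist c x + dist x b := dist_triangle c x b
    rw [dist_comm c x] at this
    linarith
  have hzU : z' ∉ U := by
    intro hz
    have := Metric.mem_ball.1 hz
    linarith
  have hzV : z' ∉ V := by
    intro hz
    have := Metric.mem_ball.1 hz
    linarith
  obtain ⟨ρseq, hconv⟩ := hc
  have hKsub : Uᶜ ⊆ ({b}ᶜ : Set M) := by
    intro x hx
    simp only [Set.mem_compl_iff, Set.mem_singleton_iff]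
    intro hxb
    exact hx (hxb ▸ Metric.mem_ball_self hrpos)
  have hKcpt : IsCompact (Uᶜ : Set M) :=
    (Metric.isOpen_ball.isClosed_compl).isCompact
  have hev := hconv.eventually_mapsTo hKcpt hKsub
    (Metric.isOpen_ball.mem_nhds (Metric.mem_ball_self hrpos) : V ∈ nhds c)
  obtain ⟨n₀, hn₀⟩ := hev.exists
  set ρ := ρseq n₀ with hρ
  have hmap : ∀ x, x ∉ U → (ρ : M ≃ₜ M) x ∈ V := fun x hx => hn₀ x hx
  obtain ⟨p, hpV, q, hqU, hlox⟩ := exists_lox hΓ ρ U V hdisj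
    (Metric.mem_ball_self hrpos) (Metric.mem_ball_self hrpos) hzU hzV hmap
  have hpc : dist p c ≤ r := Metric.mem_closedBall.1 (hclV hpV)
  have hbfix : b = p ∨ b = q := hlox.fixed_eq (hfix ρ)
  have hbq : b = q := by
    rcases hbfix with hbp | hbq
    · exfalso
      rw [← hbp] at hpc
      rw [dist_comm] at hpc
      linarith [hrcb, dist_comm b c ▸ hpc]
    · exact hbq
  rw [← hbq] at hlox
  exact ⟨ρ, p, hlox, hpc⟩

end Aux7
section Aux8

set_option linter.unusedSectionVars false
set_option maxHeartbeats 1000000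

variable {M : Type*} [MetricSpace M] [CompactSpace M] [MeasurableSpace M] [BorelSpace M]
  {Γ : Subgroup (M ≃ₜ M)}

/-- The key cocycle estimate: `σ(g^k f g^{-k})` is bounded at the conjugated
attracting fixed point. -/
lemma conj_cocycle_bound {σ : Γ → M → ℝ} {κ : ℝ} (hσ : IsCoarseCocycle σ κ)
    (g f : Γ) (p' : M) (hfp' : (f : M ≃ₜ M) p' = p') (k : ℕ) :
    |σ (g ^ k * f * (g ^ k)⁻¹) (((g ^ k : Γ) : M ≃ₜ M) p') - σ f p'| ≤ 4 * κ := by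
  set ak := ((g ^ k : Γ) : M ≃ₜ M) p' with hak
  have id2 : (((g ^ k)⁻¹ : Γ) : M ≃ₜ M) ak = p' := by
    rw [hak, coe_inv_apply, Homeomorph.symm_apply_apply]
  have id1 : ((f * (g ^ k)⁻¹ : Γ) : M ≃ₜ M) ak = p' := by
    rw [coe_mul_apply, id2, hfp']
  have s1 := hσ.cocycle (g ^ k) (f * (g ^ k)⁻¹) ak
  rw [id1, ← mul_assoc] at s1
  have s2 := hσ.cocycle f ((g ^ k)⁻¹) ak
  rw [id2] at s2
  have s3 := hσ.cocycle ((g ^ k)⁻¹) (g ^ k) p'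
  rw [inv_mul_cancel] at s3
  have hakk : ((g ^ k : Γ) : M ≃ₜ M) p' = ak := rfl
  rw [hakk] at s3
  have s4 : |σ (1 : Γ) p'| ≤ κ := by
    have h4 := hσ.cocycle 1 1 p'
    rw [one_mul] at h4
    have : σ (1 : Γ) p' - (σ (1 : Γ) (((1 : Γ) : M ≃ₜ M) p') + σ (1 : Γ) p')
        = - σ (1 : Γ) (((1 : Γ) : M ≃ₜ M) p') := by ring
    rw [this, abs_neg] at h4
    have hone : ((1 : Γ) : M ≃ₜ M) p' = p' := coe_one_apply p'
    rw [hone] at h4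
    exact h4
  rw [abs_le] at s1 s2 s3 s4 ⊢
  constructor <;> [linarith [s1.1, s1.2, s2.1, s2.2, s3.1, s3.2, s4.1, s4.2];
    linarith [s1.1, s1.2, s2.1, s2.2, s3.1, s3.2, s4.1, s4.2]]

/-- Uniform lower mass bound for complements of small balls around group elements. -/
lemma mass_bound (hΓ : IsConvergenceGroup Γ) (hNE : IsNonElementary Γ)
    (m : MetricSpace (Γ ⊕ M)) (hm : IsCompatibleMetric Γ m)
    (σ : Γ → M → ℝ) (κ : ℝ) (hσ : IsCoarseCocycle σ κ)
    (h : Γ → ℝ) (hexp : IsExpandingWith m σ h)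
    (β : ℝ) (μ : Measure M) (hμ : IsCoarsePSDim σ β μ) :
    ∃ ε₀ > 0, ∃ c : ℝ, 0 < c ∧ ∀ γ : Γ,
      ENNReal.ofReal c ≤ μ {x : M | ε₀ ≤ cdist m (Sum.inr x) (Sum.inl γ)} := by
  letI := m
  haveI : CompactSpace (Γ ⊕ M) := hm.compact
  obtain ⟨C₀, hprob, hC₀, hPS⟩ := hμ
  haveI := hprob
  have hinrcont : Continuous (fun x : M => (Sum.inr x : Γ ⊕ M)) :=
    hm.isEmbedding_inr.continuous
  by_contra hcon
  push_neg at hcon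
  have hsel : ∀ n : ℕ, ∃ γ : Γ,
      μ {x : M | 1/((n:ℝ)+1) ≤ dist (Sum.inr x : Γ ⊕ M) (Sum.inl γ)}
        < ENNReal.ofReal (1/((n:ℝ)+1)) := by
    intro n
    exact hcon (1/((n:ℝ)+1)) (by positivity) (1/((n:ℝ)+1)) (by positivity)
  choose γseq hγseq using hsel
  obtain ⟨L, -, φ, hφ, hLtd⟩ := isCompact_univ.tendsto_subseq
    (x := fun n => (Sum.inl (γseq n) : Γ ⊕ M)) (fun n => Set.mem_univ _)
  have hsmall : ∀ x0 : ℝ, 0 < x0 → ∀ᶠ n in atTop, 1/((φ n : ℝ)+1) < x0 := by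
    intro x0 hx0
    obtain ⟨N, hN⟩ := exists_nat_one_div_lt hx0
    filter_upwards [Filter.eventually_ge_atTop N] with n hn
    have h1 : ((N:ℝ)+1) ≤ ((φ n : ℝ)+1) := by
      have h0 : N ≤ φ n := le_trans hn (hφ.le_apply)
      have h0' : (N:ℝ) ≤ (φ n : ℝ) := Nat.cast_le.2 h0
      linarith
    calc 1/((φ n : ℝ)+1) ≤ 1/((N:ℝ)+1) := by
          apply one_div_le_one_div_of_le
          · positivity
          · exact h1
      _ < x0 := hN
  cases L with
  | inl α =>
    -- impossible: the distance from `inr M` to the isolated point `inl α` is positive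
    obtain ⟨ρiso, hρiso, hisol⟩ := inl_isolated m hm α
    have hMne : Nonempty M := by
      obtain ⟨a₁, _, _, ha₁, _⟩ := exists_three_limit hNE
      exact ⟨a₁⟩
    obtain ⟨x₀, -, hx₀min⟩ := isCompact_univ.exists_isMinOn Set.univ_nonempty
      ((hinrcont.dist continuous_const).continuousOn
        : ContinuousOn (fun x : M => dist (Sum.inr x : Γ ⊕ M) (Sum.inl α)) Set.univ)
    have hx₀ : ∀ x : M, x ∈ Set.univ →
        dist (Sum.inr x₀ : Γ ⊕ M) (Sum.inl α) ≤ dist (Sum.inr x : Γ ⊕ M) (Sum.inl α) :=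
      fun x hx => hx₀min hx
    set η := dist (Sum.inr x₀ : Γ ⊕ M) (Sum.inl α) with hη
    have hηpos : 0 < η := dist_pos.2 (fun hc => nomatch hc)
    have hev1 : ∀ᶠ n in atTop, (Sum.inl (γseq (φ n)) : Γ ⊕ M) = Sum.inl α := by
      have := Metric.tendsto_nhds.1 hLtd ρiso hρiso
      exact this.mono fun n hn => hisol _ hn
    have hev2 := hsmall (min η 1) (lt_min hηpos one_pos)
    obtain ⟨n, heq, hlt⟩ := (hev1.and hev2).exists
    have hγα : γseq (φ n) = α := Sum.inl.inj heq
    have huniv : {x : M | 1/((φ n:ℝ)+1) ≤ dist (Sum.inr x : Γ ⊕ M) (Sum.inl (γseq (φ n)))}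
        = Set.univ := by
      apply Set.eq_univ_of_forall
      intro x
      have h1 : η ≤ dist (Sum.inr x : Γ ⊕ M) (Sum.inl α) := hx₀ x (Set.mem_univ x)
      rw [Set.mem_setOf_eq, hγα]
      have : 1/((φ n:ℝ)+1) < min η 1 := hlt
      have := min_le_left η (1:ℝ)
      linarith
    have hcontr := hγseq (φ n)
    rw [huniv] at hcontr
    have h1 : (μ Set.univ : ENNReal) = 1 := measure_univ
    rw [h1] at hcontr
    have h2 : ENNReal.ofReal (1/((φ n:ℝ)+1)) ≤ ENNReal.ofReal 1 := by
      apply ENNReal.ofReal_le_ofReal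
      have : 1/((φ n:ℝ)+1) < min η 1 := hlt
      have := min_le_right η (1:ℝ)
      linarith
    rw [ENNReal.ofReal_one] at h2
    exact absurd (lt_of_lt_of_le hcontr h2) (lt_irrefl 1)
  | inr b =>
    -- `μ` is the Dirac mass at `b`, fixed by all of `Γ`: contradiction
    have hball : ∀ δ : ℝ, 0 < δ →
        μ {x : M | δ ≤ dist (Sum.inr x : Γ ⊕ M) (Sum.inr b)} = 0 := by
      intro δ hδ
      by_contra hne
      set m₀ := μ {x : M | δ ≤ dist (Sum.inr x : Γ ⊕ M) (Sum.inr b)} with hm₀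
      have hm₀pos : 0 < m₀ := pos_iff_ne_zero.2 hne
      have hm₀top : m₀ ≠ ⊤ := measure_ne_top μ _
      have hm₀r : 0 < m₀.toReal := ENNReal.toReal_pos hne hm₀top
      have hev1 : ∀ᶠ n in atTop,
          dist (Sum.inl (γseq (φ n)) : Γ ⊕ M) (Sum.inr b) < δ/2 :=
        Metric.tendsto_nhds.1 hLtd (δ/2) (by linarith)
      have hev2 := hsmall (min (δ/2) m₀.toReal) (lt_min (by linarith) hm₀r)
      obtain ⟨n, hd, hlt⟩ := (hev1.and hev2).exists
      have hsub : {x : M | δ ≤ dist (Sum.inr x : Γ ⊕ M) (Sum.inr b)}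
          ⊆ {x : M | 1/((φ n:ℝ)+1) ≤ dist (Sum.inr x : Γ ⊕ M) (Sum.inl (γseq (φ n)))} := by
        intro x hx
        rw [Set.mem_setOf_eq] at hx ⊢
        have htri : dist (Sum.inr x : Γ ⊕ M) (Sum.inr b)
            ≤ dist (Sum.inr x : Γ ⊕ M) (Sum.inl (γseq (φ n)))
              + dist (Sum.inl (γseq (φ n)) : Γ ⊕ M) (Sum.inr b) := dist_triangle _ _ _
        have h1 : 1/((φ n:ℝ)+1) < δ/2 := lt_of_lt_of_le hlt (min_le_left _ _)
        linarith
      have hle : m₀ ≤ μ {x : M | 1/((φ n:ℝ)+1)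
          ≤ dist (Sum.inr x : Γ ⊕ M) (Sum.inl (γseq (φ n)))} := measure_mono hsub
      have hlt2 := hγseq (φ n)
      have : m₀ < ENNReal.ofReal (1/((φ n:ℝ)+1)) := lt_of_le_of_lt hle hlt2
      have h2 : ENNReal.ofReal (1/((φ n:ℝ)+1)) < m₀ := by
        have h3 : 1/((φ n:ℝ)+1) < m₀.toReal := lt_of_lt_of_le hlt (min_le_right _ _)
        calc ENNReal.ofReal (1/((φ n:ℝ)+1)) < ENNReal.ofReal m₀.toReal :=
              ENNReal.ofReal_lt_ofReal_iff_of_nonneg (by positivity) |>.2 h3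
          _ = m₀ := ENNReal.ofReal_toReal hm₀top
      exact absurd (lt_trans this h2) (lt_irrefl _)
    have hcompl : μ ({b}ᶜ) = 0 := by
      have hsub : ({b}ᶜ : Set M) ⊆ ⋃ k : ℕ,
          {x : M | 1/((k:ℝ)+1) ≤ dist (Sum.inr x : Γ ⊕ M) (Sum.inr b)} := by
        intro x hx
        have hxb : x ≠ b := hx
        have hdp : 0 < dist (Sum.inr x : Γ ⊕ M) (Sum.inr b) :=
          dist_pos.2 (fun hc => hxb (Sum.inr.inj hc))
        obtain ⟨k, hk⟩ := exists_nat_one_div_lt hdp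
        exact Set.mem_iUnion.2 ⟨k, le_of_lt hk⟩
      refine measure_mono_null hsub (measure_iUnion_null fun k => hball _ (by positivity))
    have hμb : μ {b} = 1 := by
      have := measure_add_measure_compl (measurableSet_singleton b) (μ := μ)
      rw [hcompl, add_zero] at this
      rw [this]
      exact measure_univ
    have hfix : ∀ γ : Γ, (γ : M ≃ₜ M) b = b := by
      intro γ
      by_contra hne
      have h2 : μ {(γ : M ≃ₜ M) b} = 0 :=
        measure_mono_null (by
          intro y hy
          rw [Set.mem_singleton_iff] at hy
          rw [hy]
          exact fun hc => hne hc) hcompl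
      have h3 : (Measure.map ((γ : M ≃ₜ M) : M → M) μ) {(γ : M ≃ₜ M) b}
          = μ (((γ : M ≃ₜ M) : M → M) ⁻¹' {(γ : M ≃ₜ M) b}) :=
        Measure.map_apply (γ : M ≃ₜ M).continuous.measurable (measurableSet_singleton _)
      have h4 : ((γ : M ≃ₜ M) : M → M) ⁻¹' {(γ : M ≃ₜ M) b} = {b} := by
        ext y
        simp only [Set.mem_preimage, Set.mem_singleton_iff]
        exact ⟨fun hy => (γ : M ≃ₜ M).injective hy, fun hy => by rw [hy]⟩
      have h5 := (hPS γ).1 h2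
      rw [h3, h4, hμb] at h5
      exact one_ne_zero h5
    -- two limit points distinct from b, and two loxodromic elements
    obtain ⟨cx, cy, hcxΛ, hcyΛ, hcxy, hcxb, hcyb⟩ := exists_two_limit_ne hNE b
    have hwit : ∀ c : M, c ∈ limitSet Γ → c ≠ b → ∃ ρseq : ℕ → Γ,
        TendstoLocallyUniformlyOnConst (fun n x => ((ρseq n : Γ) : M ≃ₜ M) x) c {b}ᶜ := by
      intro c hcΛ hcb
      obtain ⟨e, ρs, hρ⟩ := hcΛ
      by_cases heb : e = b
      · exact ⟨ρs, heb ▸ hρ⟩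
      · exfalso
        have hbmem : b ∈ ({e}ᶜ : Set M) := by
          simp only [Set.mem_compl_iff, Set.mem_singleton_iff]
          exact fun hc => heb hc.symm
        have ht := hρ.tendsto_at hbmem
        have hconst : (fun n => ((ρs n : Γ) : M ≃ₜ M) b) = fun _ => b := by
          funext n; exact hfix (ρs n)
        rw [hconst] at ht
        exact hcb (tendsto_nhds_unique tendsto_const_nhds ht).symm
    obtain ⟨g, p, hg, hgp⟩ := build_lox hΓ hfix (hwit cx hcxΛ hcxb) hcxb
      (Ne.symm hcxy) hcyb
    obtain ⟨f, p', hf, hfp⟩ := build_lox hΓ hfix (hwit cy hcyΛ hcyb) hcyb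
      hcxy hcxb
    -- geometry of the fixed points
    set rx := min (min (dist cx b) (dist cy cx)) (dist cy b) / 3 with hrx
    set ry := min (min (dist cy b) (dist cx cy)) (dist cx b) / 3 with hry
    have hrxpos : 0 < rx := by
      have h1 : 0 < dist cx b := dist_pos.2 hcxb
      have h2 : 0 < dist cy cx := dist_pos.2 (Ne.symm hcxy)
      have h3 : 0 < dist cy b := dist_pos.2 hcyb
      have : 0 < min (min (dist cx b) (dist cy cx)) (dist cy b) := lt_min (lt_min h1 h2) h3
      positivity
    have hrypos : 0 < ry := by
      have h1 : 0 < dist cy b := dist_pos.2 hcyb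
      have h2 : 0 < dist cx cy := dist_pos.2 hcxy
      have h3 : 0 < dist cx b := dist_pos.2 hcxb
      have : 0 < min (min (dist cy b) (dist cx cy)) (dist cx b) := lt_min (lt_min h1 h2) h3
      positivity
    have hrxd : 3 * rx ≤ dist cy cx := by
      have hle : min (min (dist cx b) (dist cy cx)) (dist cy b) ≤ dist cy cx :=
        le_trans (min_le_left _ _) (min_le_right _ _)
      rw [hrx]; linarith
    have hryd : 3 * ry ≤ dist cx cy := by
      have hle : min (min (dist cy b) (dist cx cy)) (dist cx b) ≤ dist cx cy :=
        le_trans (min_le_left _ _) (min_le_right _ _)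
      rw [hry]; linarith
    have hrxb : 3 * rx ≤ dist cx b := by
      have hle : min (min (dist cx b) (dist cy cx)) (dist cy b) ≤ dist cx b :=
        le_trans (min_le_left _ _) (min_le_left _ _)
      rw [hrx]; linarith
    have hryb : 3 * ry ≤ dist cy b := by
      have hle : min (min (dist cy b) (dist cx cy)) (dist cx b) ≤ dist cy b :=
        le_trans (min_le_left _ _) (min_le_left _ _)
      rw [hry]; linarith
    have hgp' : dist p cx ≤ rx := hgp
    have hfp'' : dist p' cy ≤ ry := hfp
    have hpb : p ≠ b := by
      intro hc
      rw [hc] at hgp'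
      rw [dist_comm] at hgp'
      have := dist_comm cx b ▸ hrxb
      linarith [dist_comm b cx ▸ hgp']
    have hp'b : p' ≠ b := by
      intro hc
      rw [hc] at hfp''
      have h1 : dist cy b ≤ dist cy b := le_refl _
      have h2 : dist b cy ≤ ry := hfp''
      rw [dist_comm] at h2
      linarith
    have hpp' : p ≠ p' := by
      intro hc
      have h1 : dist cy p ≤ ry := by
        rw [hc, dist_comm]
        exact hfp''
      have htri : dist cy cx ≤ dist cy p + dist p cx := dist_triangle _ _ _
      have h3 : dist cy cx ≤ ry + rx := by linarith
      have h4 : 3 * rx ≤ ry + rx := le_trans hrxd h3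
      have h5 : 3 * ry ≤ ry + rx := by
        have := hryd
        rw [dist_comm cx cy] at this
        linarith
      linarith
    -- f does not fix p
    have hfnotp : (f : M ≃ₜ M) p ≠ p := by
      intro hc
      rcases hf.fixed_eq hc with hpe | hpe
      · exact hpp' hpe
      · exact hpb hpe
    -- a point x ≠ b with f x ≠ b
    have hfpb : (f : M ≃ₜ M) p ≠ b := by
      intro hc
      have : (f : M ≃ₜ M) p = (f : M ≃ₜ M) b := by rw [hc, hfix f]
      exact hpb ((f : M ≃ₜ M).injective this)
    have hinj : Function.Injective (fun k : ℕ => g ^ k * f * (g ^ k)⁻¹) :=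
      conj_seq_injective hg hfnotp ⟨p, hpb, hfpb⟩
    -- conjugated loxodromics
    have hwlox : ∀ k : ℕ, IsLoxodromicWith (g ^ k * f * (g ^ k)⁻¹)
        (((g ^ k : Γ) : M ≃ₜ M) p') b := by
      intro k
      have := hf.conj (g ^ k)
      rwa [hfix (g ^ k)] at this
    -- separation
    have hpk : Tendsto (fun k => ((g ^ k : Γ) : M ≃ₜ M) p') atTop (nhds p) := by
      have hp'ne : p' ∈ ({b}ᶜ : Set M) := by
        simp only [Set.mem_compl_iff, Set.mem_singleton_iff]
        exact hp'b
      exact hg.2.2.2.1.tendsto_at hp'ne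
    have hsep : ∃ c0 > 0, ∀ᶠ k in atTop,
        c0 ≤ dist (Sum.inr b : Γ ⊕ M) (Sum.inr (((g ^ k : Γ) : M ≃ₜ M) p')) := by
      set D := dist (Sum.inr b : Γ ⊕ M) (Sum.inr p) with hD
      have hDpos : 0 < D := dist_pos.2 (fun hc => hpb (Sum.inr.inj hc).symm)
      have htd : Tendsto (fun k => dist (Sum.inr b : Γ ⊕ M)
          (Sum.inr (((g ^ k : Γ) : M ≃ₜ M) p'))) atTop (nhds D) := by
        have h1 : Tendsto (fun k => (Sum.inr (((g ^ k : Γ) : M ≃ₜ M) p') : Γ ⊕ M))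
            atTop (nhds (Sum.inr p)) := (hinrcont.tendsto p).comp hpk
        exact (tendsto_const_nhds.dist h1)
      refine ⟨D/2, by linarith, ?_⟩
      have hev : ∀ᶠ y in nhds D, D/2 ≤ y :=
        eventually_nhds_iff.2 ⟨Set.Ioi (D/2), fun y hy => le_of_lt hy, isOpen_Ioi,
          by simp; linarith⟩
      exact htd.eventually hev
    have hproper := hexp.1 (fun k : ℕ => g ^ k * f * (g ^ k)⁻¹)
      (fun k => ((g ^ k : Γ) : M ≃ₜ M) p') (fun _ => b) hinj hwlox hsep
    -- cocycle bound contradiction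
    have hbound : ∀ k : ℕ, |σ (g ^ k * f * (g ^ k)⁻¹) (((g ^ k : Γ) : M ≃ₜ M) p') - σ f p'|
        ≤ 4 * κ := fun k => conj_cocycle_bound hσ g f p' hf.2.1 k
    obtain ⟨k, hk⟩ := (hproper.eventually (Filter.eventually_ge_atTop
      (σ f p' + 4 * κ + 1))).exists
    have := hbound k
    rw [abs_le] at this
    linarith [this.2]

end Aux8
set_option linter.unusedSectionVars false in
set_option maxHeartbeats 1000000 in
/-- The Shadow Lemma, Theorem 7.1: for all sufficiently small `ε > 0`
there is `C > 1` such that `C⁻¹ e^{-β‖γ‖_σ} ≤ μ(S_ε(γ)) ≤ C e^{-β‖γ‖_σ}` for all `γ`. -/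
theorem shadow_lemma
    {M : Type*} [MetricSpace M] [CompactSpace M] [MeasurableSpace M] [BorelSpace M]
    {Γ : Subgroup (M ≃ₜ M)} (hΓ : IsConvergenceGroup Γ) (hNE : IsNonElementary Γ)
    (m : MetricSpace (Γ ⊕ M)) (hm : IsCompatibleMetric Γ m)
    (σ : Γ → M → ℝ) (κ : ℝ) (hσ : IsCoarseCocycle σ κ)
    (h : Γ → ℝ) (hexp : IsExpandingWith m σ h)
    (β : ℝ) (μ : Measure M) (hμ : IsCoarsePSDim σ β μ) :
    ∃ ε₀ > 0, ∀ ε : ℝ, 0 < ε → ε ≤ ε₀ → ∃ C > 1, ∀ γ : Γ,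
      C⁻¹ * Real.exp (-β * h γ) ≤ (μ (shadow m ε γ)).toReal ∧
      (μ (shadow m ε γ)).toReal ≤ C * Real.exp (-β * h γ) := by
  letI := m
  obtain ⟨ε₀, hε₀, c, hc, hmass⟩ := mass_bound hΓ hNE m hm σ κ hσ h hexp β μ hμ
  obtain ⟨C₀, hprob, hC₀, hPS⟩ := hμ
  haveI := hprob
  refine ⟨ε₀, hε₀, fun ε hε hεle => ?_⟩
  obtain ⟨Cε, hCε, hCb⟩ := hexp.2 (ε/2) (by linarith)
  set K := C₀ + |β| * Cε with hK
  have hKnn : 0 ≤ K := by positivity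
  set Cbig := max (Real.exp K / c) (Real.exp K) + 1 with hCbig
  have hCgt : 1 < Cbig := by
    have h1 : (1:ℝ) ≤ Real.exp K := Real.one_le_exp hKnn
    have h2 : Real.exp K ≤ max (Real.exp K / c) (Real.exp K) := le_max_right _ _
    rw [hCbig]; linarith
  have hCpos : 0 < Cbig := lt_trans one_pos hCgt
  refine ⟨Cbig, hCgt, fun γ => ?_⟩
  -- the base set of the shadow
  set A := {x : M | ε ≤ cdist m (Sum.inr x) (Sum.inl (γ⁻¹ : Γ))} with hA
  have hAclosed : IsClosed {x : M | ε ≤ dist (Sum.inr x : Γ ⊕ M) (Sum.inl (γ⁻¹ : Γ))} :=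
    isClosed_le continuous_const (hm.isEmbedding_inr.continuous.dist continuous_const)
  have hAmeas : MeasurableSet A := hAclosed.measurableSet
  have hshadow : shadow m ε γ = (fun y : M => ((γ⁻¹ : Γ) : M ≃ₜ M) y) ⁻¹' A := by
    ext y
    constructor
    · rintro ⟨x, hx, rfl⟩
      show ((γ⁻¹ : Γ) : M ≃ₜ M) ((γ : M ≃ₜ M) x) ∈ A
      rw [coe_inv_apply, Homeomorph.symm_apply_apply]
      exact hx
    · intro hy
      refine ⟨((γ⁻¹ : Γ) : M ≃ₜ M) y, hy, ?_⟩
      show (γ : M ≃ₜ M) ((γ : M ≃ₜ M).symm y) = y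
      exact Homeomorph.apply_symm_apply _ _
  have hmeas : Measurable (((γ⁻¹ : Γ) : M ≃ₜ M) : M → M) :=
    ((γ⁻¹ : Γ) : M ≃ₜ M).continuous.measurable
  set ν := Measure.map (((γ⁻¹ : Γ) : M ≃ₜ M) : M → M) μ with hν
  haveI : IsProbabilityMeasure ν := Measure.isProbabilityMeasure_map hmeas.aemeasurable
  have hνA : ν A = μ (shadow m ε γ) := by
    rw [hshadow]
    exact Measure.map_apply hmeas hAmeas
  have hac : ν ≪ μ := (hPS γ⁻¹).1
  have hae := (hPS γ⁻¹).2.2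
  simp only [inv_inv] at hae
  -- pointwise a.e. bounds on A
  have haeA : ∀ᵐ x ∂μ, x ∈ A →
      (ENNReal.ofReal (Real.exp (-K - β * h γ)) ≤ ν.rnDeriv μ x ∧
        ν.rnDeriv μ x ≤ ENNReal.ofReal (Real.exp (K - β * h γ))) := by
    filter_upwards [hae, Measure.rnDeriv_lt_top ν μ] with x hx hxtop hxA
    have hxd : ε/2 < cdist m (Sum.inr x) (Sum.inl (γ⁻¹ : Γ)) := lt_of_lt_of_le (by linarith) hxA
    have hσx : |σ γ x - h γ| ≤ Cε := hCb γ x hxd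
    have h1 : β * (h γ - σ γ x) ≤ |β| * Cε := by
      refine le_trans (le_abs_self _) ?_
      rw [abs_mul]
      exact mul_le_mul_of_nonneg_left (by rwa [abs_sub_comm]) (abs_nonneg β)
    have h2 : β * (σ γ x - h γ) ≤ |β| * Cε := by
      refine le_trans (le_abs_self _) ?_
      rw [abs_mul]
      exact mul_le_mul_of_nonneg_left hσx (abs_nonneg β)
    have hup : C₀ - β * σ γ x ≤ K - β * h γ := by rw [hK]; nlinarith [h1]
    have hlo : -K - β * h γ ≤ -C₀ - β * σ γ x := by rw [hK]; nlinarith [h2]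
    constructor
    · rw [ENNReal.ofReal_le_iff_le_toReal hxtop.ne]
      exact le_trans (Real.exp_le_exp.2 hlo) hx.1
    · rw [ENNReal.le_ofReal_iff_toReal_le hxtop.ne (Real.exp_nonneg _)]
      exact le_trans hx.2 (Real.exp_le_exp.2 hup)
  have hint : ∫⁻ x in A, ν.rnDeriv μ x ∂μ = ν A := Measure.setLIntegral_rnDeriv hac A
  -- upper bound
  have hup : μ (shadow m ε γ) ≤ ENNReal.ofReal (Real.exp (K - β * h γ)) := by
    rw [← hνA, ← hint]
    calc ∫⁻ x in A, ν.rnDeriv μ x ∂μ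
        ≤ ∫⁻ _ in A, ENNReal.ofReal (Real.exp (K - β * h γ)) ∂μ :=
          setLIntegral_mono_ae measurable_const.aemeasurable
            (haeA.mono fun x hx hxA => (hx hxA).2)
      _ = ENNReal.ofReal (Real.exp (K - β * h γ)) * μ A := setLIntegral_const _ _
      _ ≤ ENNReal.ofReal (Real.exp (K - β * h γ)) * 1 :=
          mul_le_mul_right prob_le_one _
      _ = ENNReal.ofReal (Real.exp (K - β * h γ)) := mul_one _
  -- lower bound
  have hmass' : ENNReal.ofReal c ≤ μ A := by
    refine le_trans (hmass γ⁻¹) (measure_mono ?_)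
    intro x hx
    exact le_trans hεle hx
  have hlo : ENNReal.ofReal (Real.exp (-K - β * h γ) * c) ≤ μ (shadow m ε γ) := by
    rw [← hνA, ← hint, ENNReal.ofReal_mul (Real.exp_nonneg _)]
    calc ENNReal.ofReal (Real.exp (-K - β * h γ)) * ENNReal.ofReal c
        ≤ ENNReal.ofReal (Real.exp (-K - β * h γ)) * μ A := mul_le_mul_right hmass' _
      _ = ∫⁻ _ in A, ENNReal.ofReal (Real.exp (-K - β * h γ)) ∂μ := (setLIntegral_const _ _).symm
      _ ≤ ∫⁻ x in A, ν.rnDeriv μ x ∂μ :=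
          setLIntegral_mono_ae (Measure.measurable_rnDeriv ν μ).aemeasurable
            (haeA.mono fun x hx hxA => (hx hxA).1)
  have hfin : μ (shadow m ε γ) ≠ ⊤ := measure_ne_top μ _
  constructor
  · -- lower bound, real form
    have h1 : Real.exp (-K - β * h γ) * c ≤ (μ (shadow m ε γ)).toReal :=
      (ENNReal.ofReal_le_iff_le_toReal hfin).1 hlo
    have h2 : Cbig⁻¹ ≤ c * Real.exp (-K) := by
      have h3 : Real.exp K / c ≤ Cbig := by
        rw [hCbig]
        have := le_max_left (Real.exp K / c) (Real.exp K)
        linarith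
      have h4 : 0 < Real.exp K / c := div_pos (Real.exp_pos _) hc
      have h5 : Cbig⁻¹ ≤ (Real.exp K / c)⁻¹ := inv_anti₀ h4 h3
      calc Cbig⁻¹ ≤ (Real.exp K / c)⁻¹ := h5
        _ = c / Real.exp K := inv_div (Real.exp K) c ▸ by rw [inv_div]
        _ = c * Real.exp (-K) := by rw [Real.exp_neg]; ring
    have hexpadd : Real.exp (-K - β * h γ) = Real.exp (-K) * Real.exp (-β * h γ) := by
      rw [show -K - β * h γ = -K + (-β * h γ) by ring, Real.exp_add]
    calc Cbig⁻¹ * Real.exp (-β * h γ)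
        ≤ (c * Real.exp (-K)) * Real.exp (-β * h γ) :=
          mul_le_mul_of_nonneg_right h2 (Real.exp_nonneg _)
      _ = Real.exp (-K - β * h γ) * c := by rw [hexpadd]; ring
      _ ≤ (μ (shadow m ε γ)).toReal := h1
  · -- upper bound, real form
    have h1 : (μ (shadow m ε γ)).toReal ≤ Real.exp (K - β * h γ) :=
      ENNReal.toReal_le_of_le_ofReal (Real.exp_nonneg _) hup
    have hexpadd : Real.exp (K - β * h γ) = Real.exp K * Real.exp (-β * h γ) := by
      rw [show K - β * h γ = K + (-β * h γ) by ring, Real.exp_add]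
    have h2 : Real.exp K ≤ Cbig := by
      rw [hCbig]
      have := le_max_right (Real.exp K / c) (Real.exp K)
      linarith
    calc (μ (shadow m ε γ)).toReal ≤ Real.exp (K - β * h γ) := h1
      _ = Real.exp K * Real.exp (-β * h γ) := hexpadd
      _ ≤ Cbig * Real.exp (-β * h γ) := mul_le_mul_of_nonneg_right h2 (Real.exp_nonneg _)
end

section
/- Let Γ ⊂ Homeo(M) be a non-elementary convergence group and let M^{(2)} := {(x, y) ∈ M² : x ≠ y} with the diagonal Γ-action. For (x, y) ∈ M^{(2)}, the orbit Γ·(x, y) is escaping (meaning {γ ∈ Γ : γ(x, y) ∈ K} is finite for every compact subset K ⊂ M^{(2)}) if and only if neither x nor y is a conical limit point of Γ. -/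
open Filter Topology MeasureTheory Set

variable {M : Type*} [MetricSpace M] [CompactSpace M]

/-- Locally uniform convergence to a constant implies pointwise convergence on the set. -/
lemma tluc_tendsto {X Y : Type*} [TopologicalSpace X] [TopologicalSpace Y]
    {F : ℕ → X → Y} {a : Y} {S : Set X}
    (h : TendstoLocallyUniformlyOnConst F a S) {z : X} (hz : z ∈ S) :
    Tendsto (fun n => F n z) atTop (nhds a) := by
  rw [Filter.tendsto_def]
  intro U hU
  obtain ⟨V, hV, hev⟩ := h U hU z hz
  have hzV : z ∈ V := mem_of_mem_nhdsWithin hz hV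
  filter_upwards [hev] with n hn
  exact hn z hzV

/-- A non-elementary group acts on a space with at least three points. -/
lemma exists_three_of_nonElementary {M : Type*} [MetricSpace M] [CompactSpace M]
    {Γ : Subgroup (M ≃ₜ M)} (hNE : IsNonElementary Γ) :
    ∃ u v w : M, u ≠ v ∧ u ≠ w ∧ v ≠ w := by
  have h0 : (limitSet Γ).Nonempty := by
    rw [← Set.encard_pos]
    calc (0 : ℕ∞) < 3 := by norm_num
    _ ≤ _ := hNE
  obtain ⟨u, hu⟩ := h0
  have h1 : (limitSet Γ \ {u}).encard + 1 = (limitSet Γ).encard :=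
    Set.encard_diff_singleton_add_one hu
  have h2 : (1 : ℕ∞) < (limitSet Γ \ {u}).encard := by
    have : (2 : ℕ∞) + 1 ≤ (limitSet Γ \ {u}).encard + 1 := by
      rw [h1]; exact hNE
    have h2' : (2 : ℕ∞) ≤ (limitSet Γ \ {u}).encard :=
      (ENat.add_le_add_iff_right (by simp)).mp this
    exact lt_of_lt_of_le (by norm_num) h2'
  obtain ⟨v, w, hv, hw, hvw⟩ := Set.one_lt_encard_iff.mp h2
  exact ⟨u, v, w, fun h => hv.2 (by simp [← h]), fun h => hw.2 (by simp [← h]), hvw⟩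

/-- Auxiliary: if the orbit of `(x, y)` is escaping then `x` is not conical. -/
lemma aux_not_conical {M : Type*} [MetricSpace M] [CompactSpace M]
    {Γ : Subgroup (M ≃ₜ M)} (h3 : ∃ u v w : M, u ≠ v ∧ u ≠ w ∧ v ≠ w)
    {x y : M} (hxy : y ≠ x)
    (hfin : ∀ K : Set (M × M), IsCompact K → K ⊆ offDiag2 M →
      {γ : Γ | ((γ : M ≃ₜ M) x, (γ : M ≃ₜ M) y) ∈ K}.Finite) :
    ¬ IsConicalLimitPoint Γ x := by
  rintro ⟨a, b, γ, hab, hxa, hyb⟩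
  set r : ℝ := dist a b / 3 with hr_def
  have hr : 0 < r := by
    have := dist_pos.mpr hab
    simp only [hr_def]; linarith
  set K : Set (M × M) := Metric.closedBall a r ×ˢ Metric.closedBall b r with hK_def
  have hKc : IsCompact K :=
    (Metric.isClosed_closedBall.isCompact).prod (Metric.isClosed_closedBall.isCompact)
  have hKsub : K ⊆ offDiag2 M := by
    rintro ⟨p, q⟩ ⟨hp, hq⟩ h
    simp only [Set.mem_setOf_eq] at h
    simp only [Metric.mem_closedBall] at hp hq
    have h1 : dist a b ≤ dist a p + dist q b := by
      rw [show p = q from h] at *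
      exact dist_triangle a q b
    rw [dist_comm a p] at h1
    have := dist_pos.mpr hab
    simp only [hr_def] at hp hq
    linarith
  have hS : {γ : Γ | ((γ : M ≃ₜ M) x, (γ : M ≃ₜ M) y) ∈ K}.Finite := hfin K hKc hKsub
  -- eventually in K
  have hyb' : Tendsto (fun n => (γ n : M ≃ₜ M) y) atTop (nhds b) := hyb y hxy
  have hev : ∀ᶠ n in atTop, ((γ n : M ≃ₜ M) x, (γ n : M ≃ₜ M) y) ∈ K := by
    have h1 := hxa.eventually_mem (Metric.closedBall_mem_nhds a hr)
    have h2 := hyb'.eventually_mem (Metric.closedBall_mem_nhds b hr)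
    filter_upwards [h1, h2] with n hn1 hn2
    exact ⟨hn1, hn2⟩
  obtain ⟨N, hN⟩ := eventually_atTop.mp hev
  set g : ℕ → Γ := fun n => γ (n + N) with hg_def
  have hmem : ∀ n, g n ∈ {γ : Γ | ((γ : M ≃ₜ M) x, (γ : M ≃ₜ M) y) ∈ K} :=
    fun n => hN (n + N) (by omega)
  haveI : Finite ↥{γ : Γ | ((γ : M ≃ₜ M) x, (γ : M ≃ₜ M) y) ∈ K} := hS.to_subtype
  set f : ℕ → ↥{γ : Γ | ((γ : M ≃ₜ M) x, (γ : M ≃ₜ M) y) ∈ K} :=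
    fun n => ⟨g n, hmem n⟩ with hf_def
  obtain ⟨s, hs⟩ := Finite.exists_infinite_fiber f
  have hT : {n : ℕ | g n = (s : Γ)}.Infinite := by
    have heq : {n : ℕ | g n = (s : Γ)} = f ⁻¹' {s} := by
      ext n
      simp only [Set.mem_setOf_eq, Set.mem_preimage, Set.mem_singleton_iff]
      exact ⟨fun h => Subtype.ext h, fun h => congrArg Subtype.val h⟩
    rw [heq, ← Set.infinite_coe_iff]
    exact hs
  have hfreq : ∃ᶠ n in atTop, g n = (s : Γ) := by
    rw [Filter.frequently_atTop]
    intro N'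
    obtain ⟨n, hn, hn'⟩ := hT.exists_gt N'
    exact ⟨n, hn'.le, hn⟩
  have hclaim : ∀ z : M, z ≠ x → ((s : Γ) : M ≃ₜ M) z = b := by
    intro z hz
    have h1 : Tendsto (fun n => (g n : M ≃ₜ M) z) atTop (nhds b) :=
      (hyb z hz).comp (tendsto_add_atTop_nat N)
    have h2 : ∃ᶠ n in atTop,
        (g n : M ≃ₜ M) z = (((s : Γ) : M ≃ₜ M) z) :=
      hfreq.mono fun n hn => by rw [hn]
    exact (tendsto_nhds_unique_of_frequently_eq h1 tendsto_const_nhds h2).symm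
  -- two distinct points ≠ x
  obtain ⟨u, v, w, huv, huw, hvw⟩ := h3
  obtain ⟨p, q, hpq, hpx, hqx⟩ : ∃ p q : M, p ≠ q ∧ p ≠ x ∧ q ≠ x := by
    by_cases hux : u = x
    · exact ⟨v, w, hvw, fun h => huv (hux.trans h.symm), fun h => huw (hux.trans h.symm)⟩
    · by_cases hvx : v = x
      · exact ⟨u, w, huw, hux, fun h => hvw (hvx.trans h.symm)⟩
      · exact ⟨u, v, huv, hux, hvx⟩
  exact hpq (((s : Γ) : M ≃ₜ M).injective ((hclaim p hpx).trans (hclaim q hqx).symm))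

/-- Lemma 11.3: the orbit `Γ·(x,y) ⊆ M^{(2)}` is escaping if and only
if neither `x` nor `y` is a conical limit point of `Γ`. -/
theorem escaping_orbit_iff_not_conical
    {M : Type*} [MetricSpace M] [CompactSpace M]
    {Γ : Subgroup (M ≃ₜ M)} (hΓ : IsConvergenceGroup Γ) (hNE : IsNonElementary Γ)
    (x y : M) (hxy : x ≠ y) :
    (∀ K : Set (M × M), IsCompact K → K ⊆ offDiag2 M →
      {γ : Γ | ((γ : M ≃ₜ M) x, (γ : M ≃ₜ M) y) ∈ K}.Finite) ↔
    (¬ IsConicalLimitPoint Γ x ∧ ¬ IsConicalLimitPoint Γ y) := by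
  have h3 := exists_three_of_nonElementary hNE
  constructor
  · intro hfin
    refine ⟨aux_not_conical h3 hxy.symm hfin, ?_⟩
    have hfin' : ∀ K : Set (M × M), IsCompact K → K ⊆ offDiag2 M →
        {γ : Γ | ((γ : M ≃ₜ M) y, (γ : M ≃ₜ M) x) ∈ K}.Finite := by
      intro K hK hKsub
      have hK' : IsCompact (Prod.swap '' K : Set (M × M)) := hK.image continuous_swap
      have hKsub' : (Prod.swap '' K : Set (M × M)) ⊆ offDiag2 M := by
        rintro p ⟨q, hq, rfl⟩
        exact (hKsub hq).symm
      refine (hfin _ hK' hKsub').subset ?_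
      intro γ hγ
      exact ⟨_, hγ, rfl⟩
    exact aux_not_conical h3 hxy hfin'
  · rintro ⟨hcx, hcy⟩ K hK hKsub
    by_contra hfin
    have hSinf : {γ : Γ | ((γ : M ≃ₜ M) x, (γ : M ≃ₜ M) y) ∈ K}.Infinite := hfin
    obtain e := hSinf.natEmbedding
    set γ : ℕ → Γ := fun n => ((e n : _) : Γ) with hγ_def
    have hγinj : Function.Injective γ :=
      Subtype.val_injective.comp e.injective
    have hγK : ∀ n, ((γ n : M ≃ₜ M) x, (γ n : M ≃ₜ M) y) ∈ K := fun n => (e n).2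
    obtain ⟨a, b, φ, hφ, hconv⟩ := hΓ γ hγinj
    set δ : ℕ → Γ := fun n => γ (φ n) with hδ_def
    have hδK : ∀ n, ((δ n : M ≃ₜ M) x, (δ n : M ≃ₜ M) y) ∈ K := fun n => hγK (φ n)
    have hpt : ∀ z : M, z ≠ b → Tendsto (fun n => (δ n : M ≃ₜ M) z) atTop (nhds a) :=
      fun z hz => tluc_tendsto hconv hz
    by_cases hxb : x = b
    · -- x = b, so all other points converge to a; extract convergent subsequence for x.
      have hyb : y ≠ b := fun h => hxy (hxb.trans h.symm)
      obtain ⟨c, hcK, ψ, hψ, hcv⟩ := hK.tendsto_subseq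
        (x := fun n => ((δ n : M ≃ₜ M) x, (δ n : M ≃ₜ M) y)) hδK
      have hsnd : Tendsto (fun n => (δ (ψ n) : M ≃ₜ M) y) atTop (nhds c.2) :=
        ((continuous_snd.tendsto c).comp hcv)
      have hsnd' : Tendsto (fun n => (δ (ψ n) : M ≃ₜ M) y) atTop (nhds a) :=
        (hpt y hyb).comp hψ.tendsto_atTop
      have hc2 : c.2 = a := tendsto_nhds_unique hsnd hsnd'
      have hfst : Tendsto (fun n => (δ (ψ n) : M ≃ₜ M) x) atTop (nhds c.1) :=
        ((continuous_fst.tendsto c).comp hcv)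
      refine hcx ⟨c.1, a, fun n => δ (ψ n), ?_, hfst, ?_⟩
      · rw [← hc2]; exact hKsub hcK
      · intro z hz
        have hzb : z ≠ b := fun h => hz (h.trans hxb.symm)
        exact (hpt z hzb).comp hψ.tendsto_atTop
    · by_cases hyb : y = b
      · -- symmetric case: y = b
        obtain ⟨c, hcK, ψ, hψ, hcv⟩ := hK.tendsto_subseq
          (x := fun n => ((δ n : M ≃ₜ M) x, (δ n : M ≃ₜ M) y)) hδK
        have hfst : Tendsto (fun n => (δ (ψ n) : M ≃ₜ M) x) atTop (nhds c.1) :=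
          ((continuous_fst.tendsto c).comp hcv)
        have hfst' : Tendsto (fun n => (δ (ψ n) : M ≃ₜ M) x) atTop (nhds a) :=
          (hpt x hxb).comp hψ.tendsto_atTop
        have hc1 : c.1 = a := tendsto_nhds_unique hfst hfst'
        have hsnd : Tendsto (fun n => (δ (ψ n) : M ≃ₜ M) y) atTop (nhds c.2) :=
          ((continuous_snd.tendsto c).comp hcv)
        refine hcy ⟨c.2, a, fun n => δ (ψ n), ?_, hsnd, ?_⟩
        · rw [← hc1]; exact (hKsub hcK).symm
        · intro z hz
          have hzb : z ≠ b := fun h => hz (h.trans hyb.symm)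
          exact (hpt z hzb).comp hψ.tendsto_atTop
      · -- neither equals b: both coordinates converge to a, contradicting K ⊆ offDiag2.
        have hx' := hpt x hxb
        have hy' := hpt y hyb
        have htend : Tendsto (fun n => ((δ n : M ≃ₜ M) x, (δ n : M ≃ₜ M) y))
            atTop (nhds (a, a)) := hx'.prodMk_nhds hy'
        have haa : (a, a) ∈ K :=
          hK.isClosed.mem_of_tendsto htend (Filter.Eventually.of_forall hδK)
        exact (hKsub haa) rfl
end
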